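/- arXiv:1803.03315 — 6 statements merged into one kernel-verified Lean document; each statement's English description precedes it below -/
import Mathlib

section
/- Let B be a thickened emerald with good triple ({A_i}_{i∈ℤ7}, C, i*). Then the induced subgraph B − C (i.e., B restricted to the union of the sets A_i) is a 7-bracelet with good pair ({A_i}_{i∈ℤ7}, i*). -/
open SimpleGraph

namespace Paper

variable {V : Type*}

/-- `X` is complete to `Y` in `G`. -/
def CompleteTo (G : SimpleGraph V) (X Y : Set V) : Prop :=
  ∀ x ∈ X, ∀ y ∈ Y, G.Adj x y

/-- `X` is anticomplete to `Y` in `G`. -/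
def AnticompleteTo (G : SimpleGraph V) (X Y : Set V) : Prop :=
  ∀ x ∈ X, ∀ y ∈ Y, ¬ G.Adj x y

/-- Closed neighborhood of `v` inside the induced subgraph of `G` on `S`. -/
def cnbr (G : SimpleGraph V) (S : Set V) (v : V) : Set V :=
  {w | w ∈ S ∧ (w = v ∨ G.Adj v w)}

/-- Neighbors of `v` inside the set `X`. -/
def nbrIn (G : SimpleGraph V) (X : Set V) (v : V) : Set V :=
  {w | w ∈ X ∧ G.Adj v w}

/-- `G` is a complete graph. -/
def IsCompleteGraph (G : SimpleGraph V) : Prop :=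
  ∀ u v : V, u ≠ v → G.Adj u v

/-- The induced subgraph of `G` on `S` admits a clique-cutset: a (possibly empty) clique
`C ⊊ S` such that removing `C` from the induced subgraph on `S` disconnects it. -/
def HasCliqueCutsetOn (G : SimpleGraph V) (S : Set V) : Prop :=
  ∃ C : Set V, C ⊆ S ∧ C ≠ S ∧ G.IsClique C ∧ ¬ (G.induce (S \ C)).Connected

def HasCliqueCutset (G : SimpleGraph V) : Prop :=
  HasCliqueCutsetOn G Set.univ

/-- The induced subgraph of `G` on `S` contains an induced copy of `H`. -/
def ContainsInducedOn {W : Type*} (G : SimpleGraph V) (S : Set V) (H : SimpleGraph W) : Prop :=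
  ∃ f : W ↪ V, (∀ a, f a ∈ S) ∧ ∀ a b, G.Adj (f a) (f b) ↔ H.Adj a b

/-- The induced subgraph of `G` on `S` is `H`-free. -/
def FreeOn {W : Type*} (G : SimpleGraph V) (S : Set V) (H : SimpleGraph W) : Prop :=
  ¬ ContainsInducedOn G S H

/-- `G` is `H`-free. -/
def Free {W : Type*} (G : SimpleGraph V) (H : SimpleGraph W) : Prop :=
  FreeOn G Set.univ H

/-- The path on `n` vertices. -/
def pathG (n : ℕ) : SimpleGraph (Fin n) :=
  SimpleGraph.fromRel (fun i j => (i : ℕ) + 1 = (j : ℕ))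

/-- The cycle on `n` vertices. -/
def cycG (n : ℕ) : SimpleGraph (ZMod n) :=
  SimpleGraph.fromRel (fun i j => i + 1 = j)

/-- The graph `Θ₃ʳ`: `r` internally disjoint three-edge paths meeting at their endpoints.
`Sum.inl 0` and `Sum.inl 1` are the two endpoints, and `Sum.inr (i, 0)`, `Sum.inr (i, 1)`
are the internal vertices of the `i`-th path. -/
def thetaG (r : ℕ) : SimpleGraph (Fin 2 ⊕ Fin r × Fin 2) :=
  SimpleGraph.fromRel (fun x y =>
    (∃ i : Fin r, x = Sum.inl 0 ∧ y = Sum.inr (i, 0)) ∨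
    (∃ i : Fin r, x = Sum.inr (i, 0) ∧ y = Sum.inr (i, 1)) ∨
    (∃ i : Fin r, x = Sum.inr (i, 1) ∧ y = Sum.inl 1))

/-- `B` is the vertex set of an anticomponent of `G`. -/
def IsAnticomponent (G : SimpleGraph V) (B : Set V) : Prop :=
  ∃ c : Gᶜ.ConnectedComponent, B = c.supp

/-- `G` has exactly one nontrivial anticomponent, and that anticomponent satisfies `P`. -/
def ExactlyOneNontrivialAnticomponent (G : SimpleGraph V) (P : Set V → Prop) : Prop :=
  ∃ B : Set V, IsAnticomponent G B ∧ B.Nontrivial ∧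
    (∀ B' : Set V, IsAnticomponent G B' → B'.Nontrivial → B' = B) ∧ P B

/-- The stability number of the induced subgraph of `G` on `S`. -/
noncomputable def alphaOn (G : SimpleGraph V) (S : Set V) : ℕ :=
  sSup {n | ∃ T : Finset V, ↑T ⊆ S ∧ (∀ x ∈ T, ∀ y ∈ T, x ≠ y → ¬ G.Adj x y) ∧ T.card = n}

/-- The clique number of `G`. -/
noncomputable def cliqueNumber (G : SimpleGraph V) : ℕ :=
  sSup {n | ∃ T : Finset V, G.IsNClique n T}

/-- A 7-hole in `G`, given by an injective map `x : ZMod 7 → V` whose image induces a `C₇`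
traversed in the order `x 0, x 1, …, x 6, x 0`. -/
def IsHole7 (G : SimpleGraph V) (x : ZMod 7 → V) : Prop :=
  Function.Injective x ∧ ∀ i j, G.Adj (x i) (x j) ↔ (i - j = 1 ∨ j - i = 1)

/-- The set `A_i^*`: vertices of `A i` anticomplete to `A (i-2) ∪ A (i+2)`. -/
def braceletStar (G : SimpleGraph V) (A : ZMod 7 → Set V) (i : ZMod 7) : Set V :=
  {v | v ∈ A i ∧ ∀ w ∈ A (i - 2) ∪ A (i + 2), ¬ G.Adj v w}

/-- The set `A_i^+`: vertices of `A i` anticomplete to `A (i-2)` with a neighbor in `A (i+2)`. -/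
def braceletPlus (G : SimpleGraph V) (A : ZMod 7 → Set V) (i : ZMod 7) : Set V :=
  {v | v ∈ A i ∧ (∀ w ∈ A (i - 2), ¬ G.Adj v w) ∧ ∃ w ∈ A (i + 2), G.Adj v w}

/-- The set `A_i^-`: vertices of `A i` anticomplete to `A (i+2)` with a neighbor in `A (i-2)`. -/
def braceletMinus (G : SimpleGraph V) (A : ZMod 7 → Set V) (i : ZMod 7) : Set V :=
  {v | v ∈ A i ∧ (∀ w ∈ A (i + 2), ¬ G.Adj v w) ∧ ∃ w ∈ A (i - 2), G.Adj v w}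

/-- The induced subgraph of `G` on `S` is a 7-bracelet with good pair `(A, istar)`. -/
def IsGoodPairOn (G : SimpleGraph V) (S : Set V) (A : ZMod 7 → Set V) (istar : ZMod 7) : Prop :=
  -- `A` is a partition of `S`
  (⋃ i, A i) = S ∧
  (∀ i j : ZMod 7, i ≠ j → Disjoint (A i) (A j)) ∧
  -- (I)
  (∀ i, (A i).Nonempty ∧ G.IsClique (A i) ∧
    CompleteTo G (A i) (A (i - 1) ∪ A (i + 1)) ∧
    AnticompleteTo G (A i) (A (i - 3) ∪ A (i + 3))) ∧
  -- (II) (a)-(c): `A i` is partitioned into the canonical sets `A_i^*, A_i^+, A_i^-`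
  (∀ i, A i = braceletStar G A i ∪ braceletPlus G A i ∪ braceletMinus G A i) ∧
  -- (II) (d),(e): closed neighborhoods (in the induced subgraph on `S`) of vertices of
  -- `A_i^+` (resp. `A_i^-`) form a chain under inclusion
  (∀ i, ∀ u ∈ braceletPlus G A i, ∀ v ∈ braceletPlus G A i,
    cnbr G S u ⊆ cnbr G S v ∨ cnbr G S v ⊆ cnbr G S u) ∧
  (∀ i, ∀ u ∈ braceletMinus G A i, ∀ v ∈ braceletMinus G A i,
    cnbr G S u ⊆ cnbr G S v ∨ cnbr G S v ⊆ cnbr G S u) ∧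
  -- (II) (f)
  (∀ i, ∃ v ∈ A i, (∃ w ∈ A (i - 2), ¬ G.Adj v w) ∧ ∃ w ∈ A (i + 2), ¬ G.Adj v w) ∧
  -- (III)
  braceletPlus G A (istar - 3) = ∅ ∧ braceletMinus G A (istar - 3) = ∅ ∧
  braceletPlus G A (istar + 3) = ∅ ∧ braceletMinus G A (istar + 3) = ∅ ∧
  -- (IV)
  braceletMinus G A (istar - 2) = ∅ ∧ braceletPlus G A (istar + 2) = ∅ ∧
  -- (V)
  braceletMinus G A (istar - 1) = ∅ ∧ braceletPlus G A (istar + 1) = ∅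

def IsGoodPartitionOn (G : SimpleGraph V) (S : Set V) (A : ZMod 7 → Set V) : Prop :=
  ∃ istar, IsGoodPairOn G S A istar

/-- The induced subgraph of `G` on `S` is a 7-bracelet. -/
def IsBracelet7On (G : SimpleGraph V) (S : Set V) : Prop :=
  ∃ A istar, IsGoodPairOn G S A istar

/-- The induced subgraph of `G` on `S` is a quasi-7-bracelet with good partition `A`. -/
def IsQuasiGoodPartitionOn (G : SimpleGraph V) (S : Set V) (A : ZMod 7 → Set V) : Prop :=
  (⋃ i, A i) = S ∧
  (∀ i j : ZMod 7, i ≠ j → Disjoint (A i) (A j)) ∧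
  (∀ i, (A i).Nonempty ∧ G.IsClique (A i) ∧
    CompleteTo G (A i) (A (i - 1) ∪ A (i + 1)) ∧
    AnticompleteTo G (A i) (A (i - 3) ∪ A (i + 3))) ∧
  (∀ i, ∃ v ∈ A i, (∃ w ∈ A (i - 2), ¬ G.Adj v w) ∧ ∃ w ∈ A (i + 2), ¬ G.Adj v w)

/-- The induced subgraph of `G` on `S` is a thickened emerald with good triple `(A, C, istar)`.
Here `Em, Ep, Ps, Pm, Ms, Mp` play the roles of
`A_{i*}^-, A_{i*}^+, A_{i*+2}^*, A_{i*+2}^-, A_{i*-2}^*, A_{i*-2}^+`. -/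
def IsGoodTripleTEOn (G : SimpleGraph V) (S : Set V) (A : ZMod 7 → Set V)
    (C : Set V) (istar : ZMod 7) : Prop :=
  (C ∪ ⋃ i, A i) = S ∧
  (∀ i, Disjoint C (A i)) ∧
  (∀ i j : ZMod 7, i ≠ j → Disjoint (A i) (A j)) ∧
  C.Nonempty ∧ G.IsClique C ∧
  (∀ i, (A i).Nonempty ∧ G.IsClique (A i)) ∧
  (∀ i, CompleteTo G (A i) (A (i - 1) ∪ A (i + 1)) ∧
        AnticompleteTo G (A i) (A (i - 3) ∪ A (i + 3))) ∧
  (∀ i, (i = istar - 3 ∨ i = istar - 1 ∨ i = istar + 1 ∨ i = istar + 3) →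
        AnticompleteTo G (A i) (A (i - 2) ∪ A (i + 2))) ∧
  ∃ Em Ep Ps Pm Ms Mp : Set V,
    Em.Nonempty ∧ Ep.Nonempty ∧ Ps.Nonempty ∧ Pm.Nonempty ∧ Ms.Nonempty ∧ Mp.Nonempty ∧
    List.Pairwise (fun X Y : Set V => Disjoint X Y) [Em, Ep, Ps, Pm, Ms, Mp] ∧
    G.IsClique Em ∧ G.IsClique Ep ∧ G.IsClique Ps ∧ G.IsClique Pm ∧
    G.IsClique Ms ∧ G.IsClique Mp ∧
    A istar = Em ∪ Ep ∧
    A (istar + 2) = Ps ∪ Pm ∧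
    A (istar - 2) = Ms ∪ Mp ∧
    CompleteTo G Em Mp ∧ AnticompleteTo G Em (Ms ∪ A (istar + 2)) ∧
    CompleteTo G Ep Pm ∧ AnticompleteTo G Ep (Ps ∪ A (istar - 2)) ∧
    CompleteTo G C (Ps ∪ A (istar + 3) ∪ A (istar - 3) ∪ Ms) ∧
    AnticompleteTo G C (Mp ∪ A (istar - 1) ∪ A istar ∪ A (istar + 1) ∪ Pm)

/-- The induced subgraph of `G` on `S` is a thickened emerald. -/
def IsThickenedEmeraldOn (G : SimpleGraph V) (S : Set V) : Prop :=
  ∃ A C istar, IsGoodTripleTEOn G S A C istar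

/-- The neighborhoods in `Y` of the vertices of `X` form a chain under inclusion whose
largest element is all of `Y`: this encodes "`X` can be ordered as `x_1, …, x_t` so that
`N[x_t] ∩ Y ⊆ ⋯ ⊆ N[x_1] ∩ Y = Y`". -/
def ChainedPairTo (G : SimpleGraph V) (X Y : Set V) : Prop :=
  (∀ u ∈ X, ∀ v ∈ X, nbrIn G Y u ⊆ nbrIn G Y v ∨ nbrIn G Y v ⊆ nbrIn G Y u) ∧
  (∃ u ∈ X, ∀ y ∈ Y, G.Adj u y)

/-- The induced subgraph of `G` on `S` is an `r`-lantern with good partition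
`(A, Bs 0, …, Bs (r-1), Cs 0, …, Cs (r-1), D)`, where the index `0 : Fin r` plays the role
of the index `1` of the paper. -/
def IsLanternPartitionOn (G : SimpleGraph V) (S : Set V) (r : ℕ)
    (A D : Set V) (Bs Cs : Fin r → Set V) : Prop :=
  (A ∪ D ∪ (⋃ i, Bs i) ∪ (⋃ i, Cs i)) = S ∧
  Disjoint A D ∧
  (∀ i, Disjoint A (Bs i) ∧ Disjoint A (Cs i) ∧ Disjoint D (Bs i) ∧ Disjoint D (Cs i)) ∧
  (∀ i j, Disjoint (Bs i) (Cs j)) ∧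
  (∀ i j, i ≠ j → Disjoint (Bs i) (Bs j) ∧ Disjoint (Cs i) (Cs j)) ∧
  A.Nonempty ∧ D.Nonempty ∧ (∀ i, (Bs i).Nonempty ∧ (Cs i).Nonempty) ∧
  G.IsClique A ∧ G.IsClique D ∧ (∀ i, G.IsClique (Bs i) ∧ G.IsClique (Cs i)) ∧
  AnticompleteTo G A D ∧
  (∀ i, CompleteTo G A (Bs i) ∧ AnticompleteTo G A (Cs i)) ∧
  (∀ i, CompleteTo G D (Cs i) ∧ AnticompleteTo G D (Bs i)) ∧
  (∀ i : Fin r, i.val = 0 → ChainedPairTo G (Bs i) (Cs i) ∧ ChainedPairTo G (Cs i) (Bs i)) ∧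
  (∀ i : Fin r, i.val ≠ 0 → CompleteTo G (Bs i) (Cs i)) ∧
  (∀ i j, i ≠ j → AnticompleteTo G (Bs i ∪ Cs i) (Bs j ∪ Cs j))

/-- The induced subgraph of `G` on `S` is a lantern. -/
def IsLanternOn (G : SimpleGraph V) (S : Set V) : Prop :=
  ∃ r : ℕ, 3 ≤ r ∧ ∃ (A D : Set V) (Bs Cs : Fin r → Set V),
    IsLanternPartitionOn G S r A D Bs Cs

/-- The induced subgraph of `G` on `S` is a thickened `Θ₃ʳ` with good partition
`(A, Bs, Cs, D)`. -/
def IsThickThetaPartitionOn (G : SimpleGraph V) (S : Set V) (r : ℕ)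
    (A D : Set V) (Bs Cs : Fin r → Set V) : Prop :=
  (A ∪ D ∪ (⋃ i, Bs i) ∪ (⋃ i, Cs i)) = S ∧
  Disjoint A D ∧
  (∀ i, Disjoint A (Bs i) ∧ Disjoint A (Cs i) ∧ Disjoint D (Bs i) ∧ Disjoint D (Cs i)) ∧
  (∀ i j, Disjoint (Bs i) (Cs j)) ∧
  (∀ i j, i ≠ j → Disjoint (Bs i) (Bs j) ∧ Disjoint (Cs i) (Cs j)) ∧
  A.Nonempty ∧ D.Nonempty ∧ (∀ i, (Bs i).Nonempty ∧ (Cs i).Nonempty) ∧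
  G.IsClique A ∧ G.IsClique D ∧ (∀ i, G.IsClique (Bs i) ∧ G.IsClique (Cs i)) ∧
  AnticompleteTo G A D ∧
  (∀ i, CompleteTo G A (Bs i) ∧ AnticompleteTo G A (Cs i)) ∧
  (∀ i, CompleteTo G D (Cs i) ∧ AnticompleteTo G D (Bs i)) ∧
  (∀ i, CompleteTo G (Bs i) (Cs i)) ∧
  (∀ i j, i ≠ j → AnticompleteTo G (Bs i ∪ Cs i) (Bs j ∪ Cs j))

/-- The induced subgraph of `G` on `S` is a `k`-ring with partition `X`. -/
def IsRingPartitionOn (G : SimpleGraph V) (S : Set V) (k : ℕ) (X : ZMod k → Set V) : Prop :=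
  (⋃ i, X i) = S ∧
  (∀ i j : ZMod k, i ≠ j → Disjoint (X i) (X j)) ∧
  (∀ i, (X i).Nonempty) ∧
  (∀ i, ∀ u ∈ X i, X i ⊆ cnbr G S u) ∧
  (∀ i, ∀ u ∈ X i, cnbr G S u ⊆ X (i - 1) ∪ X i ∪ X (i + 1)) ∧
  (∀ i, ∃ u ∈ X i, cnbr G S u = X (i - 1) ∪ X i ∪ X (i + 1)) ∧
  (∀ i, ∀ u ∈ X i, ∀ v ∈ X i, cnbr G S u ⊆ cnbr G S v ∨ cnbr G S v ⊆ cnbr G S u)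

/-- The induced subgraph of `G` on `S` is a ring (of some length `k ≥ 4`). -/
def IsRingOn (G : SimpleGraph V) (S : Set V) : Prop :=
  ∃ k : ℕ, 4 ≤ k ∧ ∃ X : ZMod k → Set V, IsRingPartitionOn G S k X

/-- The induced subgraph of `G` on `S` is a 6-ring. -/
def IsRing6On (G : SimpleGraph V) (S : Set V) : Prop :=
  ∃ X : ZMod 6 → Set V, IsRingPartitionOn G S 6 X

/-- The induced subgraph of `G` on `S` is a 6-wreath. -/
def IsWreath6On (G : SimpleGraph V) (S : Set V) : Prop :=
  ∃ X : ZMod 6 → Set V, IsRingPartitionOn G S 6 X ∧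
    CompleteTo G (X 0) (X 1) ∧ CompleteTo G (X 2) (X 3) ∧ CompleteTo G (X 4) (X 5)

/-- The induced subgraph of `G` on `S` is a 6-crown with good triple `(C, D, istar)`. -/
def IsCrownTripleOn (G : SimpleGraph V) (S : Set V) (C D : ZMod 6 → Set V)
    (istar : ZMod 6) : Prop :=
  ((⋃ i, C i) ∪ (⋃ i, D i)) = S ∧
  (∀ i j : ZMod 6, i ≠ j → Disjoint (C i) (C j) ∧ Disjoint (D i) (D j)) ∧
  (∀ i j : ZMod 6, Disjoint (C i) (D j)) ∧
  (∀ i, G.IsClique (C i) ∧ G.IsClique (D i)) ∧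
  (∀ i, (C i).Nonempty) ∧
  D (istar - 2) = ∅ ∧ D (istar - 1) = ∅ ∧
  (D (istar + 1)).Nonempty ∧ (D (istar + 2)).Nonempty ∧ (D (istar + 3)).Nonempty ∧
  (∀ i, CompleteTo G (C i) (C (i - 1) ∪ C (i + 1)) ∧
        AnticompleteTo G (C i) (C (i + 2) ∪ C (i + 3) ∪ C (i + 4))) ∧
  (∀ i, CompleteTo G (D i) (C (i - 1) ∪ C i ∪ C (i + 1)) ∧
        AnticompleteTo G (D i) (C (i + 2) ∪ C (i + 3) ∪ C (i + 4))) ∧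
  (∀ i j : ZMod 6, i ≠ j → AnticompleteTo G (D i) (D j))

/-- The induced subgraph of `G` on `S` is a 6-crown. -/
def IsCrown6On (G : SimpleGraph V) (S : Set V) : Prop :=
  ∃ C D istar, IsCrownTripleOn G S C D istar

/-- The set `X`: vertices outside `S` mixed on `S`. -/
def setX (G : SimpleGraph V) (S : Set V) : Set V :=
  {v | v ∉ S ∧ (∃ w ∈ S, G.Adj v w) ∧ ∃ w ∈ S, ¬ G.Adj v w}

/-- The set `L_A`: vertices of `X` with a neighbor in `A`, anticomplete to `S \ A`. -/
def setL (G : SimpleGraph V) (S A : Set V) : Set V :=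
  {v | v ∈ setX G S ∧ (∃ w ∈ A, G.Adj v w) ∧ ∀ w ∈ S \ A, ¬ G.Adj v w}

/-- The set `T_{B_i}` (for `A := A`, `Bi := B_i`, `Ci := C_i`): vertices of `X` complete to
`A ∪ B_i`, mixed on `C_i`, anticomplete to `S \ (A ∪ B_i ∪ C_i)`. -/
def setT (G : SimpleGraph V) (S A Bi Ci : Set V) : Set V :=
  {v | v ∈ setX G S ∧ (∀ w ∈ A ∪ Bi, G.Adj v w) ∧
       (∃ w ∈ Ci, G.Adj v w) ∧ (∃ w ∈ Ci, ¬ G.Adj v w) ∧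
       ∀ w ∈ S \ (A ∪ Bi ∪ Ci), ¬ G.Adj v w}

/-- The set `R_{B_i}`: vertices of `X` complete to `A`, with a neighbor in `B_i`,
anticomplete to `S \ (A ∪ B_i)`. -/
def setR (G : SimpleGraph V) (S A Bi : Set V) : Set V :=
  {v | v ∈ setX G S ∧ (∀ w ∈ A, G.Adj v w) ∧ (∃ w ∈ Bi, G.Adj v w) ∧
       ∀ w ∈ S \ (A ∪ Bi), ¬ G.Adj v w}

end Paper

open Paper

theorem statement_5 {V : Type*} [Fintype V] (B : SimpleGraph V)
    (A : ZMod 7 → Set V) (C : Set V) (istar : ZMod 7)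
    (h : IsGoodTripleTEOn B Set.univ A C istar) :
    IsGoodPairOn B (⋃ i, A i) A istar := by
  classical
  obtain ⟨-, -, hDisj, -, -, hA, hCompAnti, hSpec, Em, Ep, Ps, Pm, Ms, Mp,
    hEmne, hEpne, hPsne, hPmne, hMsne, hMpne, -, -, -, -, -, -, -,
    hAeq, hPeq, hMeq, hEmMp, hEmA, hEpPm, hEpA, -, -⟩ := h
  have hclq : ∀ i, B.IsClique (A i) := fun i => (hA i).2
  have hne : ∀ i, (A i).Nonempty := fun i => (hA i).1
  have hcomp : ∀ i, CompleteTo B (A i) (A (i-1) ∪ A (i+1)) := fun i => (hCompAnti i).1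
  have hanti3 : ∀ i, AnticompleteTo B (A i) (A (i-3) ∪ A (i+3)) := fun i => (hCompAnti i).2
  -- special anticompleteness facts with normalized indices
  have spm3 := hSpec (istar - 3) (Or.inl rfl)
  have spm1 := hSpec (istar - 1) (Or.inr (Or.inl rfl))
  have spp1 := hSpec (istar + 1) (Or.inr (Or.inr (Or.inl rfl)))
  have spp3 := hSpec (istar + 3) (Or.inr (Or.inr (Or.inr rfl)))
  rw [(by decide : ∀ x : ZMod 7, x - 3 - 2 = x + 2),
      (by decide : ∀ x : ZMod 7, x - 3 + 2 = x - 1)] at spm3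
  rw [(by decide : ∀ x : ZMod 7, x - 1 - 2 = x - 3),
      (by decide : ∀ x : ZMod 7, x - 1 + 2 = x + 1)] at spm1
  rw [(by decide : ∀ x : ZMod 7, x + 1 - 2 = x - 1),
      (by decide : ∀ x : ZMod 7, x + 1 + 2 = x + 3)] at spp1
  rw [(by decide : ∀ x : ZMod 7, x + 3 - 2 = x + 1),
      (by decide : ∀ x : ZMod 7, x + 3 + 2 = x - 2)] at spp3
  -- distance three anticompleteness with normalized indices
  have t0 := hanti3 istar
  have tm2 := hanti3 (istar - 2)
  rw [(by decide : ∀ x : ZMod 7, x - 2 - 3 = x + 2),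
      (by decide : ∀ x : ZMod 7, x - 2 + 3 = x + 1)] at tm2
  -- completeness with normalized indices
  have c0 := hcomp istar
  have cp2 := hcomp (istar + 2)
  rw [(by decide : ∀ x : ZMod 7, x + 2 - 1 = x + 1),
      (by decide : ∀ x : ZMod 7, x + 2 + 1 = x + 3)] at cp2
  have cm2 := hcomp (istar - 2)
  rw [(by decide : ∀ x : ZMod 7, x - 2 - 1 = x - 3),
      (by decide : ∀ x : ZMod 7, x - 2 + 1 = x - 1)] at cm2
  -- memberships
  have memEm : ∀ {u}, u ∈ Em → u ∈ A istar := fun hu => by rw [hAeq]; exact Or.inl hu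
  have memEp : ∀ {u}, u ∈ Ep → u ∈ A istar := fun hu => by rw [hAeq]; exact Or.inr hu
  have memPs : ∀ {u}, u ∈ Ps → u ∈ A (istar + 2) := fun hu => by rw [hPeq]; exact Or.inl hu
  have memPm : ∀ {u}, u ∈ Pm → u ∈ A (istar + 2) := fun hu => by rw [hPeq]; exact Or.inr hu
  have memMs : ∀ {u}, u ∈ Ms → u ∈ A (istar - 2) := fun hu => by rw [hMeq]; exact Or.inl hu
  have memMp : ∀ {u}, u ∈ Mp → u ∈ A (istar - 2) := fun hu => by rw [hMeq]; exact Or.inr hu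
  have hcases : ∀ j : ZMod 7, j = istar ∨ j = istar + 1 ∨ j = istar + 2 ∨ j = istar + 3 ∨
      j = istar - 3 ∨ j = istar - 2 ∨ j = istar - 1 :=
    fun j => (by decide : ∀ a b : ZMod 7, a = b ∨ a = b + 1 ∨ a = b + 2 ∨ a = b + 3 ∨
      a = b - 3 ∨ a = b - 2 ∨ a = b - 1) j istar
  -- closed neighbourhood characterizations
  have keyEp : ∀ u ∈ Ep, ∀ w ∈ (⋃ i, A i), ((w = u ∨ B.Adj u w) ↔
      (w ∈ A (istar - 1) ∨ w ∈ A istar ∨ w ∈ A (istar + 1) ∨ w ∈ Pm)) := by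
    intro u hu w hwS
    have huA : u ∈ A istar := memEp hu
    constructor
    · rintro (rfl | hadj)
      · exact Or.inr (Or.inl huA)
      · obtain ⟨j, hwj⟩ := Set.mem_iUnion.mp hwS
        rcases hcases j with rfl | rfl | rfl | rfl | rfl | rfl | rfl
        · exact Or.inr (Or.inl hwj)
        · exact Or.inr (Or.inr (Or.inl hwj))
        · rw [hPeq] at hwj
          rcases hwj with hw | hw
          · exact absurd hadj (hEpA u hu w (Or.inl hw))
          · exact Or.inr (Or.inr (Or.inr hw))
        · exact absurd hadj (t0 u huA w (Or.inr hwj))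
        · exact absurd hadj (t0 u huA w (Or.inl hwj))
        · exact absurd hadj (hEpA u hu w (Or.inr hwj))
        · exact Or.inl hwj
    · rintro (hw | hw | hw | hw)
      · exact Or.inr (c0 u huA w (Or.inl hw))
      · by_cases he : w = u
        · exact Or.inl he
        · exact Or.inr (hclq istar huA hw (Ne.symm he))
      · exact Or.inr (c0 u huA w (Or.inr hw))
      · exact Or.inr (hEpPm u hu w hw)
  have keyEm : ∀ u ∈ Em, ∀ w ∈ (⋃ i, A i), ((w = u ∨ B.Adj u w) ↔
      (w ∈ A (istar - 1) ∨ w ∈ A istar ∨ w ∈ A (istar + 1) ∨ w ∈ Mp)) := by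
    intro u hu w hwS
    have huA : u ∈ A istar := memEm hu
    constructor
    · rintro (rfl | hadj)
      · exact Or.inr (Or.inl huA)
      · obtain ⟨j, hwj⟩ := Set.mem_iUnion.mp hwS
        rcases hcases j with rfl | rfl | rfl | rfl | rfl | rfl | rfl
        · exact Or.inr (Or.inl hwj)
        · exact Or.inr (Or.inr (Or.inl hwj))
        · exact absurd hadj (hEmA u hu w (Or.inr hwj))
        · exact absurd hadj (t0 u huA w (Or.inr hwj))
        · exact absurd hadj (t0 u huA w (Or.inl hwj))
        · rw [hMeq] at hwj
          rcases hwj with hw | hw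
          · exact absurd hadj (hEmA u hu w (Or.inl hw))
          · exact Or.inr (Or.inr (Or.inr hw))
        · exact Or.inl hwj
    · rintro (hw | hw | hw | hw)
      · exact Or.inr (c0 u huA w (Or.inl hw))
      · by_cases he : w = u
        · exact Or.inl he
        · exact Or.inr (hclq istar huA hw (Ne.symm he))
      · exact Or.inr (c0 u huA w (Or.inr hw))
      · exact Or.inr (hEmMp u hu w hw)
  have keyMp : ∀ u ∈ Mp, ∀ w ∈ (⋃ i, A i), ((w = u ∨ B.Adj u w) ↔
      (w ∈ A (istar - 3) ∨ w ∈ A (istar - 2) ∨ w ∈ A (istar - 1) ∨ w ∈ Em)) := by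
    intro u hu w hwS
    have huA : u ∈ A (istar - 2) := memMp hu
    constructor
    · rintro (rfl | hadj)
      · exact Or.inr (Or.inl huA)
      · obtain ⟨j, hwj⟩ := Set.mem_iUnion.mp hwS
        rcases hcases j with rfl | rfl | rfl | rfl | rfl | rfl | rfl
        · rw [hAeq] at hwj
          rcases hwj with hw | hw
          · exact Or.inr (Or.inr (Or.inr hw))
          · exact absurd hadj.symm (hEpA w hw u (Or.inr huA))
        · exact absurd hadj (tm2 u huA w (Or.inr hwj))
        · exact absurd hadj (tm2 u huA w (Or.inl hwj))
        · exact absurd hadj.symm (spp3 w hwj u (Or.inr huA))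
        · exact Or.inl hwj
        · exact Or.inr (Or.inl hwj)
        · exact Or.inr (Or.inr (Or.inl hwj))
    · rintro (hw | hw | hw | hw)
      · exact Or.inr (cm2 u huA w (Or.inl hw))
      · by_cases he : w = u
        · exact Or.inl he
        · exact Or.inr (hclq (istar - 2) huA hw (Ne.symm he))
      · exact Or.inr (cm2 u huA w (Or.inr hw))
      · exact Or.inr (hEmMp w hw u hu).symm
  have keyPm : ∀ u ∈ Pm, ∀ w ∈ (⋃ i, A i), ((w = u ∨ B.Adj u w) ↔
      (w ∈ A (istar + 1) ∨ w ∈ A (istar + 2) ∨ w ∈ A (istar + 3) ∨ w ∈ Ep)) := by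
    intro u hu w hwS
    have huA : u ∈ A (istar + 2) := memPm hu
    constructor
    · rintro (rfl | hadj)
      · exact Or.inr (Or.inl huA)
      · obtain ⟨j, hwj⟩ := Set.mem_iUnion.mp hwS
        rcases hcases j with rfl | rfl | rfl | rfl | rfl | rfl | rfl
        · rw [hAeq] at hwj
          rcases hwj with hw | hw
          · exact absurd hadj.symm (hEmA w hw u (Or.inr huA))
          · exact Or.inr (Or.inr (Or.inr hw))
        · exact Or.inl hwj
        · exact Or.inr (Or.inl hwj)
        · exact Or.inr (Or.inr (Or.inl hwj))
        · exact absurd hadj.symm (spm3 w hwj u (Or.inl huA))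
        · exact absurd hadj.symm (tm2 w hwj u (Or.inl huA))
        · exact absurd hadj.symm (hanti3 (istar - 1) w hwj u
            (Or.inr (by rwa [(by decide : ∀ x : ZMod 7, x - 1 + 3 = x + 2)])))
    · rintro (hw | hw | hw | hw)
      · exact Or.inr (cp2 u huA w (Or.inl hw))
      · by_cases he : w = u
        · exact Or.inl he
        · exact Or.inr (hclq (istar + 2) huA hw (Ne.symm he))
      · exact Or.inr (cp2 u huA w (Or.inr hw))
      · exact Or.inr (hEpPm w hw u hu).symm
  -- classification of the plus/minus sets
  have plus0 : braceletPlus B A istar ⊆ Ep := by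
    rintro v ⟨hv, hnm, -⟩
    rw [hAeq] at hv
    rcases hv with hv | hv
    · obtain ⟨m, hm⟩ := hMpne
      exact absurd (hEmMp v hv m hm) (hnm m (memMp hm))
    · exact hv
  have minus0 : braceletMinus B A istar ⊆ Em := by
    rintro v ⟨hv, hnp, -⟩
    rw [hAeq] at hv
    rcases hv with hv | hv
    · exact hv
    · obtain ⟨p, hp⟩ := hPmne
      exact absurd (hEpPm v hv p hp) (hnp p (memPm hp))
  have plusm2 : braceletPlus B A (istar - 2) ⊆ Mp := by
    rintro v ⟨hv, -, w, hw, hvw⟩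
    rw [(by decide : ∀ x : ZMod 7, x - 2 + 2 = x)] at hw
    rw [hMeq] at hv
    rcases hv with hv | hv
    · exfalso
      rw [hAeq] at hw
      rcases hw with hw | hw
      · exact hEmA w hw v (Or.inl hv) hvw.symm
      · exact hEpA w hw v (Or.inr (memMs hv)) hvw.symm
    · exact hv
  have minusp2 : braceletMinus B A (istar + 2) ⊆ Pm := by
    rintro v ⟨hv, -, w, hw, hvw⟩
    rw [(by decide : ∀ x : ZMod 7, x + 2 - 2 = x)] at hw
    rw [hPeq] at hv
    rcases hv with hv | hv
    · exfalso
      rw [hAeq] at hw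
      rcases hw with hw | hw
      · exact hEmA w hw v (Or.inr (memPs hv)) hvw.symm
      · exact hEpA w hw v (Or.inl hv) hvw.symm
    · exact hv
  -- the empty plus/minus sets
  have plusm3 : braceletPlus B A (istar - 3) = ∅ := by
    refine Set.eq_empty_iff_forall_notMem.mpr ?_
    rintro v ⟨hv, -, w, hw, hvw⟩
    rw [(by decide : ∀ x : ZMod 7, x - 3 + 2 = x - 1)] at hw
    exact spm3 v hv w (Or.inr hw) hvw
  have minusm3 : braceletMinus B A (istar - 3) = ∅ := by
    refine Set.eq_empty_iff_forall_notMem.mpr ?_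
    rintro v ⟨hv, -, w, hw, hvw⟩
    rw [(by decide : ∀ x : ZMod 7, x - 3 - 2 = x + 2)] at hw
    exact spm3 v hv w (Or.inl hw) hvw
  have plusp3 : braceletPlus B A (istar + 3) = ∅ := by
    refine Set.eq_empty_iff_forall_notMem.mpr ?_
    rintro v ⟨hv, -, w, hw, hvw⟩
    rw [(by decide : ∀ x : ZMod 7, x + 3 + 2 = x - 2)] at hw
    exact spp3 v hv w (Or.inr hw) hvw
  have minusp3 : braceletMinus B A (istar + 3) = ∅ := by
    refine Set.eq_empty_iff_forall_notMem.mpr ?_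
    rintro v ⟨hv, -, w, hw, hvw⟩
    rw [(by decide : ∀ x : ZMod 7, x + 3 - 2 = x + 1)] at hw
    exact spp3 v hv w (Or.inl hw) hvw
  have minusm2 : braceletMinus B A (istar - 2) = ∅ := by
    refine Set.eq_empty_iff_forall_notMem.mpr ?_
    rintro v ⟨hv, -, w, hw, hvw⟩
    rw [(by decide : ∀ x : ZMod 7, x - 2 - 2 = x + 3)] at hw
    exact spp3 w hw v (Or.inr hv) hvw.symm
  have plusp2 : braceletPlus B A (istar + 2) = ∅ := by
    refine Set.eq_empty_iff_forall_notMem.mpr ?_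
    rintro v ⟨hv, -, w, hw, hvw⟩
    rw [(by decide : ∀ x : ZMod 7, x + 2 + 2 = x - 3)] at hw
    exact spm3 w hw v (Or.inl hv) hvw.symm
  have minusm1 : braceletMinus B A (istar - 1) = ∅ := by
    refine Set.eq_empty_iff_forall_notMem.mpr ?_
    rintro v ⟨hv, -, w, hw, hvw⟩
    rw [(by decide : ∀ x : ZMod 7, x - 1 - 2 = x - 3)] at hw
    exact spm1 v hv w (Or.inl hw) hvw
  have plusp1 : braceletPlus B A (istar + 1) = ∅ := by
    refine Set.eq_empty_iff_forall_notMem.mpr ?_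
    rintro v ⟨hv, -, w, hw, hvw⟩
    rw [(by decide : ∀ x : ZMod 7, x + 1 + 2 = x + 3)] at hw
    exact spp1 v hv w (Or.inr hw) hvw
  have plusm1 : braceletPlus B A (istar - 1) = ∅ := by
    refine Set.eq_empty_iff_forall_notMem.mpr ?_
    rintro v ⟨hv, -, w, hw, hvw⟩
    rw [(by decide : ∀ x : ZMod 7, x - 1 + 2 = x + 1)] at hw
    exact spm1 v hv w (Or.inr hw) hvw
  have minusp1 : braceletMinus B A (istar + 1) = ∅ := by
    refine Set.eq_empty_iff_forall_notMem.mpr ?_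
    rintro v ⟨hv, -, w, hw, hvw⟩
    rw [(by decide : ∀ x : ZMod 7, x + 1 - 2 = x - 1)] at hw
    exact spp1 v hv w (Or.inl hw) hvw
  refine ⟨rfl, hDisj, fun i => ⟨(hA i).1, (hA i).2, (hCompAnti i).1, (hCompAnti i).2⟩,
    ?_, ?_, ?_, ?_, plusm3, minusm3, plusp3, minusp3, minusm2, plusp2, minusm1, plusp1⟩
  · -- (II)(a)-(c)
    intro i
    apply Set.Subset.antisymm
    · intro v hv
      by_cases hm : ∃ w ∈ A (i - 2), B.Adj v w
      · by_cases hp : ∃ w ∈ A (i + 2), B.Adj v w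
        · exfalso
          obtain ⟨wm, hwm, am⟩ := hm
          obtain ⟨wp, hwp, ap⟩ := hp
          rcases hcases i with rfl | rfl | rfl | rfl | rfl | rfl | rfl
          · rw [hAeq] at hv
            rcases hv with hv | hv
            · exact hEmA v hv wp (Or.inr hwp) ap
            · exact hEpA v hv wm (Or.inr hwm) am
          · rw [(by decide : ∀ x : ZMod 7, x + 1 - 2 = x - 1)] at hwm
            exact spp1 v hv wm (Or.inl hwm) am
          · rw [(by decide : ∀ x : ZMod 7, x + 2 + 2 = x - 3)] at hwp
            exact spm3 wp hwp v (Or.inl hv) ap.symm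
          · rw [(by decide : ∀ x : ZMod 7, x + 3 - 2 = x + 1)] at hwm
            exact spp3 v hv wm (Or.inl hwm) am
          · rw [(by decide : ∀ x : ZMod 7, x - 3 - 2 = x + 2)] at hwm
            exact spm3 v hv wm (Or.inl hwm) am
          · rw [(by decide : ∀ x : ZMod 7, x - 2 - 2 = x + 3)] at hwm
            exact spp3 wm hwm v (Or.inr hv) am.symm
          · rw [(by decide : ∀ x : ZMod 7, x - 1 - 2 = x - 3)] at hwm
            exact spm1 v hv wm (Or.inl hwm) am
        · exact Or.inr ⟨hv, fun w hw hvw => hp ⟨w, hw, hvw⟩, hm⟩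
      · by_cases hp : ∃ w ∈ A (i + 2), B.Adj v w
        · exact Or.inl (Or.inr ⟨hv, fun w hw hvw => hm ⟨w, hw, hvw⟩, hp⟩)
        · exact Or.inl (Or.inl ⟨hv, fun w hw =>
            hw.elim (fun h hvw => hm ⟨w, h, hvw⟩) (fun h hvw => hp ⟨w, h, hvw⟩)⟩)
    · rintro v ((h | h) | h)
      exacts [h.1, h.1, h.1]
  · -- (II)(d)
    intro i u hu v hv
    rcases hcases i with rfl | rfl | rfl | rfl | rfl | rfl | rfl
    · refine Or.inl fun w hw => ?_
      obtain ⟨hwS, hw2⟩ := hw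
      exact ⟨hwS, (keyEp v (plus0 hv) w hwS).2 ((keyEp u (plus0 hu) w hwS).1 hw2)⟩
    · rw [plusp1] at hu; exact hu.elim
    · rw [plusp2] at hu; exact hu.elim
    · rw [plusp3] at hu; exact hu.elim
    · rw [plusm3] at hu; exact hu.elim
    · refine Or.inl fun w hw => ?_
      obtain ⟨hwS, hw2⟩ := hw
      exact ⟨hwS, (keyMp v (plusm2 hv) w hwS).2 ((keyMp u (plusm2 hu) w hwS).1 hw2)⟩
    · rw [plusm1] at hu; exact hu.elim
  · -- (II)(e)
    intro i u hu v hv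
    rcases hcases i with rfl | rfl | rfl | rfl | rfl | rfl | rfl
    · refine Or.inl fun w hw => ?_
      obtain ⟨hwS, hw2⟩ := hw
      exact ⟨hwS, (keyEm v (minus0 hv) w hwS).2 ((keyEm u (minus0 hu) w hwS).1 hw2)⟩
    · rw [minusp1] at hu; exact hu.elim
    · refine Or.inl fun w hw => ?_
      obtain ⟨hwS, hw2⟩ := hw
      exact ⟨hwS, (keyPm v (minusp2 hv) w hwS).2 ((keyPm u (minusp2 hu) w hwS).1 hw2)⟩
    · rw [minusp3] at hu; exact hu.elim
    · rw [minusm3] at hu; exact hu.elim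
    · rw [minusm2] at hu; exact hu.elim
    · rw [minusm1] at hu; exact hu.elim
  · -- (II)(f)
    have f0 : ∃ v ∈ A istar, (∃ w ∈ A (istar - 2), ¬ B.Adj v w) ∧
        ∃ w ∈ A (istar + 2), ¬ B.Adj v w := by
      obtain ⟨v, hv⟩ := hEmne
      obtain ⟨m, hm⟩ := hMsne
      obtain ⟨p, hp⟩ := hne (istar + 2)
      exact ⟨v, memEm hv, ⟨m, memMs hm, hEmA v hv m (Or.inl hm)⟩,
        ⟨p, hp, hEmA v hv p (Or.inr hp)⟩⟩
    have fp1 : ∃ v ∈ A (istar + 1), (∃ w ∈ A (istar + 1 - 2), ¬ B.Adj v w) ∧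
        ∃ w ∈ A (istar + 1 + 2), ¬ B.Adj v w := by
      rw [(by decide : ∀ x : ZMod 7, x + 1 - 2 = x - 1),
          (by decide : ∀ x : ZMod 7, x + 1 + 2 = x + 3)]
      obtain ⟨v, hv⟩ := hne (istar + 1)
      obtain ⟨w1, hw1⟩ := hne (istar - 1)
      obtain ⟨w2, hw2⟩ := hne (istar + 3)
      exact ⟨v, hv, ⟨w1, hw1, spp1 v hv w1 (Or.inl hw1)⟩,
        ⟨w2, hw2, spp1 v hv w2 (Or.inr hw2)⟩⟩
    have fp2 : ∃ v ∈ A (istar + 2), (∃ w ∈ A (istar + 2 - 2), ¬ B.Adj v w) ∧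
        ∃ w ∈ A (istar + 2 + 2), ¬ B.Adj v w := by
      rw [(by decide : ∀ x : ZMod 7, x + 2 - 2 = x),
          (by decide : ∀ x : ZMod 7, x + 2 + 2 = x - 3)]
      obtain ⟨v, hv⟩ := hPsne
      obtain ⟨w1, hw1⟩ := hEmne
      obtain ⟨w2, hw2⟩ := hne (istar - 3)
      exact ⟨v, memPs hv, ⟨w1, memEm hw1, fun hh => hEmA w1 hw1 v (Or.inr (memPs hv)) hh.symm⟩,
        ⟨w2, hw2, fun hh => spm3 w2 hw2 v (Or.inl (memPs hv)) hh.symm⟩⟩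
    have fp3 : ∃ v ∈ A (istar + 3), (∃ w ∈ A (istar + 3 - 2), ¬ B.Adj v w) ∧
        ∃ w ∈ A (istar + 3 + 2), ¬ B.Adj v w := by
      rw [(by decide : ∀ x : ZMod 7, x + 3 - 2 = x + 1),
          (by decide : ∀ x : ZMod 7, x + 3 + 2 = x - 2)]
      obtain ⟨v, hv⟩ := hne (istar + 3)
      obtain ⟨w1, hw1⟩ := hne (istar + 1)
      obtain ⟨w2, hw2⟩ := hne (istar - 2)
      exact ⟨v, hv, ⟨w1, hw1, spp3 v hv w1 (Or.inl hw1)⟩,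
        ⟨w2, hw2, spp3 v hv w2 (Or.inr hw2)⟩⟩
    have fm3 : ∃ v ∈ A (istar - 3), (∃ w ∈ A (istar - 3 - 2), ¬ B.Adj v w) ∧
        ∃ w ∈ A (istar - 3 + 2), ¬ B.Adj v w := by
      rw [(by decide : ∀ x : ZMod 7, x - 3 - 2 = x + 2),
          (by decide : ∀ x : ZMod 7, x - 3 + 2 = x - 1)]
      obtain ⟨v, hv⟩ := hne (istar - 3)
      obtain ⟨w1, hw1⟩ := hne (istar + 2)
      obtain ⟨w2, hw2⟩ := hne (istar - 1)
      exact ⟨v, hv, ⟨w1, hw1, spm3 v hv w1 (Or.inl hw1)⟩,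
        ⟨w2, hw2, spm3 v hv w2 (Or.inr hw2)⟩⟩
    have fm2 : ∃ v ∈ A (istar - 2), (∃ w ∈ A (istar - 2 - 2), ¬ B.Adj v w) ∧
        ∃ w ∈ A (istar - 2 + 2), ¬ B.Adj v w := by
      rw [(by decide : ∀ x : ZMod 7, x - 2 - 2 = x + 3),
          (by decide : ∀ x : ZMod 7, x - 2 + 2 = x)]
      obtain ⟨v, hv⟩ := hMsne
      obtain ⟨w1, hw1⟩ := hne (istar + 3)
      obtain ⟨w2, hw2⟩ := hEpne
      exact ⟨v, memMs hv, ⟨w1, hw1, fun hh => spp3 w1 hw1 v (Or.inr (memMs hv)) hh.symm⟩,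
        ⟨w2, memEp hw2, fun hh => hEpA w2 hw2 v (Or.inr (memMs hv)) hh.symm⟩⟩
    have fm1 : ∃ v ∈ A (istar - 1), (∃ w ∈ A (istar - 1 - 2), ¬ B.Adj v w) ∧
        ∃ w ∈ A (istar - 1 + 2), ¬ B.Adj v w := by
      rw [(by decide : ∀ x : ZMod 7, x - 1 - 2 = x - 3),
          (by decide : ∀ x : ZMod 7, x - 1 + 2 = x + 1)]
      obtain ⟨v, hv⟩ := hne (istar - 1)
      obtain ⟨w1, hw1⟩ := hne (istar - 3)
      obtain ⟨w2, hw2⟩ := hne (istar + 1)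
      exact ⟨v, hv, ⟨w1, hw1, spm1 v hv w1 (Or.inl hw1)⟩,
        ⟨w2, hw2, spm1 v hv w2 (Or.inr hw2)⟩⟩
    intro i
    rcases hcases i with rfl | rfl | rfl | rfl | rfl | rfl | rfl
    exacts [f0, fp1, fp2, fp3, fm3, fm2, fm1]
end

section
/- Let G be a finite simple graph that has exactly one nontrivial anticomponent B. Then: (1) α(G) = α(B); (2) for every graph H that has no dominating vertex, G is H-free if and only if B is H-free; (3) G admits a clique-cutset if and only if B admits a clique-cutset. -/
open SimpleGraph

open Paper

/-!
A vertex outside the unique nontrivial anticomponent `B` is a trivial anticomponent, i.e. it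
is adjacent to every other vertex. Such dominating vertices lie in no stable set of size at
least two, in no induced copy of a graph without a dominating vertex, and in every
clique-cutset, while adding them to a clique keeps it a clique. So all three invariants can be
read off `B`.
-/

namespace Paper

variable {V : Type*} {G : SimpleGraph V}

def IsDominating (G : SimpleGraph V) (v : V) : Prop :=
  ∀ w, w ≠ v → G.Adj v w

lemma isDominating_of_supp_subsingleton {v : V}
    (hv : (Gᶜ.connectedComponentMk v).supp.Subsingleton) : IsDominating G v := by
  intro w hw
  by_contra hadj
  have hvw : Gᶜ.Adj v w := ⟨fun h => hw h.symm, hadj⟩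
  exact hw (hv (ConnectedComponent.sound hvw.symm.reachable) rfl)

lemma isDominating_of_not_mem {B : Set V}
    (huniq : ∀ B' : Set V, IsAnticomponent G B' → B'.Nontrivial → B' = B) {v : V}
    (hv : v ∉ B) : IsDominating G v := by
  refine isDominating_of_supp_subsingleton (Set.not_nontrivial_iff.1 fun hnt => hv ?_)
  rw [← huniq _ ⟨_, rfl⟩ hnt]
  exact ConnectedComponent.connectedComponentMk_mem

lemma IsDominating.comap {W : Type*} {H : SimpleGraph W} {f : W ↪ V}
    (hf : ∀ a b, G.Adj (f a) (f b) ↔ H.Adj a b) {a : W} (ha : IsDominating G (f a)) :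
    IsDominating H a :=
  fun b hb => (hf a b).1 (ha _ (f.injective.ne hb))

lemma induce_connected_of_isDominating {S : Set V} {k : V} (hk : k ∈ S)
    (hdom : IsDominating G k) : (G.induce S).Connected := by
  refine (connected_iff_exists_forall_reachable _).2 ⟨⟨k, hk⟩, ?_⟩
  rintro ⟨u, hu⟩
  by_cases huk : u = k
  · subst huk; rfl
  · exact Adj.reachable (by simpa using hdom u huk)

lemma _root_.SimpleGraph.IsClique.union_of_isDominating {C D : Set V} (hC : G.IsClique C)
    (hD : ∀ v ∈ D, IsDominating G v) : G.IsClique (C ∪ D) := by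
  rintro x (hx | hx) y (hy | hy) hxy
  · exact hC hx hy hxy
  · exact (hD y hy x hxy).symm
  · exact hD x hx y hxy.symm
  · exact hD x hx y hxy.symm

lemma eq_singleton_of_isDominating_mem {T : Finset V}
    (hT : ∀ x ∈ T, ∀ y ∈ T, x ≠ y → ¬ G.Adj x y) {v : V} (hv : v ∈ T)
    (hdom : IsDominating G v) : T = {v} :=
  Finset.eq_singleton_iff_unique_mem.2
    ⟨hv, fun w hw => by_contra fun hwv => hT v hv w hw (Ne.symm hwv) (hdom w hwv)⟩

section OutsideDominating

variable {B : Set V} (hdom : ∀ v ∉ B, IsDominating G v)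
include hdom

lemma alphaOn_univ_eq_of_isDominating (hB : B.Nonempty) :
    alphaOn G Set.univ = alphaOn G B := by
  unfold alphaOn
  congr 1
  ext n
  constructor
  · rintro ⟨T, -, hT, rfl⟩
    by_cases hTB : ↑T ⊆ B
    · exact ⟨T, hTB, hT, rfl⟩
    · obtain ⟨v, hvT, hvB⟩ := Set.not_subset.1 hTB
      obtain ⟨b, hb⟩ := hB
      refine ⟨{b}, by simpa using hb, by simp, ?_⟩
      rw [eq_singleton_of_isDominating_mem hT hvT (hdom v hvB)]
      rfl
  · rintro ⟨T, -, hT, rfl⟩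
    exact ⟨T, Set.subset_univ _, hT, rfl⟩

lemma free_iff_freeOn_of_isDominating {W : Type*} {H : SimpleGraph W}
    (hH : ¬ ∃ x, IsDominating H x) : Free G H ↔ FreeOn G B H := by
  refine not_congr ⟨fun ⟨f, _, hf⟩ => ⟨f, fun a => ?_, hf⟩,
    fun ⟨f, _, hf⟩ => ⟨f, fun _ => Set.mem_univ _, hf⟩⟩
  by_contra ha
  exact hH ⟨a, (hdom _ ha).comap hf⟩

lemma compl_subset_of_not_induce_connected {C : Set V}
    (hC : ¬ (G.induce (Set.univ \ C)).Connected) : Bᶜ ⊆ C :=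
  fun k hk => by_contra fun hkC =>
    hC (induce_connected_of_isDominating ⟨trivial, hkC⟩ (hdom k hk))

lemma hasCliqueCutset_iff_hasCliqueCutsetOn_of_isDominating :
    HasCliqueCutset G ↔ HasCliqueCutsetOn G B := by
  constructor
  · rintro ⟨C, -, hCne, hCcl, hCdis⟩
    have hBC : Bᶜ ⊆ C := compl_subset_of_not_induce_connected hdom hCdis
    have hset : B \ (C ∩ B) = Set.univ \ C := by
      ext x
      have := @hBC x
      simp only [Set.mem_sdiff, Set.mem_inter_iff, Set.mem_univ, Set.mem_compl_iff,
        true_and] at this ⊢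
      tauto
    refine ⟨C ∩ B, Set.inter_subset_right, fun h => hCne ?_,
      hCcl.subset Set.inter_subset_left, hset ▸ hCdis⟩
    have hBC' : B ∪ Bᶜ ⊆ C := Set.union_subset (Set.inter_eq_right.1 h) hBC
    rwa [Set.union_compl_self, Set.univ_subset_iff] at hBC'
  · rintro ⟨C, hCB, hCne, hCcl, hCdis⟩
    have hset : Set.univ \ (C ∪ Bᶜ) = B \ C := by
      ext x
      simp only [Set.mem_sdiff, Set.mem_univ, Set.mem_union, Set.mem_compl_iff, true_and]
      tauto
    refine ⟨C ∪ Bᶜ, Set.subset_univ _, fun h => hCne ?_,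
      hCcl.union_of_isDominating hdom, hset ▸ hCdis⟩
    rw [h, Set.sdiff_self, eq_comm, Set.sdiff_eq_empty] at hset
    exact hCB.antisymm hset

end OutsideDominating

end Paper

theorem statement_6_general {V : Type*} (G : SimpleGraph V) (B : Set V)
    (hBnt : B.Nontrivial)
    (huniq : ∀ B' : Set V, IsAnticomponent G B' → B'.Nontrivial → B' = B) :
    alphaOn G Set.univ = alphaOn G B ∧
    (∀ (W : Type) [Fintype W] (H : SimpleGraph W),
        (¬ ∃ x : W, ∀ y : W, y ≠ x → H.Adj x y) → (Paper.Free G H ↔ FreeOn G B H)) ∧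
    (HasCliqueCutset G ↔ HasCliqueCutsetOn G B) := by
  have hdom : ∀ v ∉ B, IsDominating G v := fun v hv => isDominating_of_not_mem huniq hv
  exact ⟨alphaOn_univ_eq_of_isDominating hdom hBnt.nonempty,
    fun W _ H hH => free_iff_freeOn_of_isDominating hdom hH,
    hasCliqueCutset_iff_hasCliqueCutsetOn_of_isDominating hdom⟩

theorem statement_6 {V : Type*} [Fintype V] [Nonempty V] (G : SimpleGraph V) (B : Set V)
    (hB : IsAnticomponent G B) (hBnt : B.Nontrivial)
    (huniq : ∀ B' : Set V, IsAnticomponent G B' → B'.Nontrivial → B' = B) :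
    alphaOn G Set.univ = alphaOn G B ∧
    (∀ (W : Type) [Fintype W] (H : SimpleGraph W),
        (¬ ∃ x : W, ∀ y : W, y ≠ x → H.Adj x y) → (Paper.Free G H ↔ FreeOn G B H)) ∧
    (HasCliqueCutset G ↔ HasCliqueCutsetOn G B) :=
  statement_6_general G B hBnt huniq
end

section
/- Let B be a 7-bracelet with good partition {A_i}_{i∈ℤ7}, and for each i ∈ ℤ7 let A_i^*, A_i^+, A_i^− be the (unique) sets from axiom (II) of the definition. Then: (1) for all i ∈ ℤ7, A_{i−1}^+ ≠ ∅ if and only if A_{i+1}^− ≠ ∅; (2) for all i ∈ ℤ7, if A_i^+ ≠ ∅, then A_{i+3}^+ = A_{i−3}^+ = A_{i−2}^− = A_{i−1}^− = ∅; (3) for all i ∈ ℤ7, if A_i^− ≠ ∅, then A_{i+1}^+ = A_{i+2}^+ = A_{i+3}^− = A_{i−3}^− = ∅. -/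
open SimpleGraph

open Paper

/-!
A vertex of `A i` with a neighbour in `A (i + 2)` can lie neither in `A_i^*` nor in `A_i^-`,
so it lies in `A_i^+`, and symmetrically; an edge between `A (i - 1)` and `A (i + 1)` therefore
witnesses both `A_{i-1}^+ ≠ ∅` and `A_{i+1}^- ≠ ∅`, which gives (1). Writing `i = i* + k`,
axioms (III)–(V) say that `A_i^+` can be nonempty only for `k ∈ {-2, -1, 0}` and `A_i^-` only
for `k ∈ {0, 1, 2}`; (2) and (3) are then a check of offsets in `ZMod 7`.
-/

namespace Paper

variable {V : Type*} {G : SimpleGraph V} {S : Set V} {A : ZMod 7 → Set V} {i istar : ZMod 7}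
  {v w : V}

lemma mem_braceletPlus_of_adj
    (hA : A i = braceletStar G A i ∪ braceletPlus G A i ∪ braceletMinus G A i)
    (hv : v ∈ A i) (hw : w ∈ A (i + 2)) (hvw : G.Adj v w) : v ∈ braceletPlus G A i := by
  rw [hA] at hv
  rcases hv with (hstar | hplus) | hminus
  · exact absurd hvw (hstar.2 w (Or.inr hw))
  · exact hplus
  · exact absurd hvw (hminus.2.1 w hw)

lemma mem_braceletMinus_of_adj
    (hA : A i = braceletStar G A i ∪ braceletPlus G A i ∪ braceletMinus G A i)
    (hv : v ∈ A i) (hw : w ∈ A (i - 2)) (hvw : G.Adj v w) : v ∈ braceletMinus G A i := by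
  rw [hA] at hv
  rcases hv with (hstar | hplus) | hminus
  · exact absurd hvw (hstar.2 w (Or.inl hw))
  · exact absurd hvw (hplus.2.1 w hw)
  · exact hminus

lemma braceletPlus_sub_one_nonempty_iff
    (hA : ∀ j, A j = braceletStar G A j ∪ braceletPlus G A j ∪ braceletMinus G A j) :
    (braceletPlus G A (i - 1)).Nonempty ↔ (braceletMinus G A (i + 1)).Nonempty := by
  have hup : i - 1 + 2 = i + 1 := by ring
  have hdown : i + 1 - 2 = i - 1 := by ring
  constructor
  · rintro ⟨v, hv, -, w, hw, hvw⟩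
    rw [hup] at hw
    exact ⟨w, mem_braceletMinus_of_adj (hA _) hw (hdown ▸ hv) hvw.symm⟩
  · rintro ⟨v, hv, -, w, hw, hvw⟩
    rw [hdown] at hw
    exact ⟨w, mem_braceletPlus_of_adj (hA _) hw (hup ▸ hv) hvw.symm⟩

namespace IsGoodPairOn

lemma braceletPlus_eq_empty (h : IsGoodPairOn G S A istar) {k : ZMod 7}
    (hk : k ∉ ({-2, -1, 0} : Finset (ZMod 7))) : braceletPlus G A (istar + k) = ∅ := by
  obtain ⟨-, -, -, -, -, -, -, hm3, -, hp3, -, -, hp2, -, hp1⟩ := h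
  have hk' : k = -3 ∨ k = 1 ∨ k = 2 ∨ k = 3 := by revert k; decide
  rcases hk' with rfl | rfl | rfl | rfl
  · rwa [← sub_eq_add_neg]
  · exact hp1
  · exact hp2
  · exact hp3

lemma braceletMinus_eq_empty (h : IsGoodPairOn G S A istar) {k : ZMod 7}
    (hk : k ∉ ({0, 1, 2} : Finset (ZMod 7))) : braceletMinus G A (istar + k) = ∅ := by
  obtain ⟨-, -, -, -, -, -, -, -, hm3, -, hp3, hm2, -, hm1, -⟩ := h
  have hk' : k = -3 ∨ k = -2 ∨ k = -1 ∨ k = 3 := by revert k; decide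
  rcases hk' with rfl | rfl | rfl | rfl
  · rwa [← sub_eq_add_neg]
  · rwa [← sub_eq_add_neg]
  · rwa [← sub_eq_add_neg]
  · exact hp3

lemma eq_empty_of_braceletPlus_nonempty (h : IsGoodPairOn G S A istar)
    (hi : (braceletPlus G A i).Nonempty) :
    braceletPlus G A (i + 3) = ∅ ∧ braceletPlus G A (i - 3) = ∅ ∧
      braceletMinus G A (i - 2) = ∅ ∧ braceletMinus G A (i - 1) = ∅ := by
  obtain ⟨k, rfl⟩ : ∃ k, i = istar + k := ⟨i - istar, by ring⟩
  have hk : k ∈ ({-2, -1, 0} : Finset (ZMod 7)) :=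
    by_contra fun hk => hi.ne_empty (h.braceletPlus_eq_empty hk)
  have offsets : ∀ k ∈ ({-2, -1, 0} : Finset (ZMod 7)),
      k + 3 ∉ ({-2, -1, 0} : Finset (ZMod 7)) ∧ k - 3 ∉ ({-2, -1, 0} : Finset (ZMod 7)) ∧
        k - 2 ∉ ({0, 1, 2} : Finset (ZMod 7)) ∧ k - 1 ∉ ({0, 1, 2} : Finset (ZMod 7)) := by
    decide
  obtain ⟨h1, h2, h3, h4⟩ := offsets k hk
  rw [add_assoc, add_sub_assoc, add_sub_assoc, add_sub_assoc]
  exact ⟨h.braceletPlus_eq_empty h1, h.braceletPlus_eq_empty h2,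
    h.braceletMinus_eq_empty h3, h.braceletMinus_eq_empty h4⟩

lemma eq_empty_of_braceletMinus_nonempty (h : IsGoodPairOn G S A istar)
    (hi : (braceletMinus G A i).Nonempty) :
    braceletPlus G A (i + 1) = ∅ ∧ braceletPlus G A (i + 2) = ∅ ∧
      braceletMinus G A (i + 3) = ∅ ∧ braceletMinus G A (i - 3) = ∅ := by
  obtain ⟨k, rfl⟩ : ∃ k, i = istar + k := ⟨i - istar, by ring⟩
  have hk : k ∈ ({0, 1, 2} : Finset (ZMod 7)) :=
    by_contra fun hk => hi.ne_empty (h.braceletMinus_eq_empty hk)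
  have offsets : ∀ k ∈ ({0, 1, 2} : Finset (ZMod 7)),
      k + 1 ∉ ({-2, -1, 0} : Finset (ZMod 7)) ∧ k + 2 ∉ ({-2, -1, 0} : Finset (ZMod 7)) ∧
        k + 3 ∉ ({0, 1, 2} : Finset (ZMod 7)) ∧ k - 3 ∉ ({0, 1, 2} : Finset (ZMod 7)) := by
    decide
  obtain ⟨h1, h2, h3, h4⟩ := offsets k hk
  rw [add_assoc, add_assoc, add_assoc, add_sub_assoc]
  exact ⟨h.braceletPlus_eq_empty h1, h.braceletPlus_eq_empty h2,
    h.braceletMinus_eq_empty h3, h.braceletMinus_eq_empty h4⟩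

end IsGoodPairOn

end Paper

theorem statement_7_general {V : Type*} (B : SimpleGraph V) (A : ZMod 7 → Set V)
    (h : IsGoodPartitionOn B Set.univ A) :
    (∀ i : ZMod 7, braceletPlus B A (i - 1) ≠ ∅ ↔ braceletMinus B A (i + 1) ≠ ∅) ∧
    (∀ i : ZMod 7, braceletPlus B A i ≠ ∅ →
        braceletPlus B A (i + 3) = ∅ ∧ braceletPlus B A (i - 3) = ∅ ∧
        braceletMinus B A (i - 2) = ∅ ∧ braceletMinus B A (i - 1) = ∅) ∧
    (∀ i : ZMod 7, braceletMinus B A i ≠ ∅ →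
        braceletPlus B A (i + 1) = ∅ ∧ braceletPlus B A (i + 2) = ∅ ∧
        braceletMinus B A (i + 3) = ∅ ∧ braceletMinus B A (i - 3) = ∅) := by
  obtain ⟨istar, h⟩ := h
  have hpartition := h.2.2.2.1
  simp only [← Set.nonempty_iff_ne_empty]
  exact ⟨fun _ => braceletPlus_sub_one_nonempty_iff hpartition,
    fun _ => h.eq_empty_of_braceletPlus_nonempty, fun _ => h.eq_empty_of_braceletMinus_nonempty⟩

theorem statement_7 {V : Type*} [Fintype V] (B : SimpleGraph V) (A : ZMod 7 → Set V)
    (h : IsGoodPartitionOn B Set.univ A) :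
    (∀ i : ZMod 7, braceletPlus B A (i - 1) ≠ ∅ ↔ braceletMinus B A (i + 1) ≠ ∅) ∧
    (∀ i : ZMod 7, braceletPlus B A i ≠ ∅ →
        braceletPlus B A (i + 3) = ∅ ∧ braceletPlus B A (i - 3) = ∅ ∧
        braceletMinus B A (i - 2) = ∅ ∧ braceletMinus B A (i - 1) = ∅) ∧
    (∀ i : ZMod 7, braceletMinus B A i ≠ ∅ →
        braceletPlus B A (i + 1) = ∅ ∧ braceletPlus B A (i + 2) = ∅ ∧
        braceletMinus B A (i + 3) = ∅ ∧ braceletMinus B A (i - 3) = ∅) :=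
  statement_7_general B A h
end

section
/- Let G be a finite simple (P_7, C_4, C_5)-free graph, and let H = x_0, x_1, ..., x_6, x_0 (indices in ℤ7) be a 7-hole in G. Then for every vertex x ∈ V(G) \ V(H), exactly one of the following holds: (a) x is adjacent to all of x_0,...,x_6; (b) x is adjacent to none of x_0,...,x_6; (c) there exists i ∈ ℤ7 such that the set of neighbors of x on H is exactly {x_{i−1}, x_i, x_{i+1}}; (d) there exists i ∈ ℤ7 such that the set of neighbors of x on H is exactly {x_{i+2}, x_{i+3}, x_{i−3}, x_{i−2}}. -/
open SimpleGraph

/-! For a vertex `v` off the hole, let `N ⊆ ℤ₇` index its neighbours on the hole. Each forbidden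
graph yields a local closure rule for `N`: if `i, i + 2 ∈ N` then `i + 1 ∈ N` (else `v` and
`x i, x (i + 1), x (i + 2)` form a `C₄`); if `i, i + 3 ∈ N` then `i + 1 ∈ N` or `i + 2 ∈ N` (else a
`C₅`); if `i ∈ N` then some of `i + 1, …, i + 5` lies in `N` (else `x (i + 5), …, x i, v` is an
induced `P₇`). Among the 128 subsets of `ℤ₇` exactly `∅`, `ℤ₇`, the arcs of length three and the
arcs of length four satisfy the three rules, and these four kinds have different sizes. -/

namespace Paper

variable {V : Type*}

instance (n : ℕ) : DecidableRel (cycG n).Adj := fun _ _ => decidable_of_iff' _ (fromRel_adj _ _ _)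

instance (n : ℕ) : DecidableRel (pathG n).Adj := fun _ _ => decidable_of_iff' _ (fromRel_adj _ _ _)

theorem not_free_of_embedding {W : Type*} {G : SimpleGraph V} {H : SimpleGraph W} (f : W → V)
    (hf : Function.Injective f) (hadj : ∀ a b, G.Adj (f a) (f b) ↔ H.Adj a b) : ¬ Free G H :=
  fun hfree => hfree ⟨⟨f, hf⟩, fun _ => Set.mem_univ _, hadj⟩

section NeighborsOnHole

variable {G : SimpleGraph V} {x : ZMod 7 → V} {v : V}

theorem IsHole7.adj_add_iff (hx : IsHole7 G x) (i a b : ZMod 7) :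
    G.Adj (x (i + a)) (x (i + b)) ↔ (a - b = 1 ∨ b - a = 1) := by
  rw [hx.2, add_sub_add_left_eq_sub, add_sub_add_left_eq_sub]

/-- `e` numbers the vertices of `H` so that `e 0` plays the role of `v` and `e (k + 1)` that of
`x (i + k)`; it is an equivalence rather than an identity because `cycG n` lives on `ZMod n`. -/
theorem IsHole7.not_free_of_cons (hx : IsHole7 G x) (hv : v ∉ Set.range x) (i : ZMod 7)
    {m : ℕ} (hm : m ≤ 7) {W : Type*} (H : SimpleGraph W) (e : Fin (m + 1) ≃ W)
    (hH : ∀ k l : Fin m,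
      H.Adj (e k.succ) (e l.succ) ↔ ((k : ZMod 7) - l = 1 ∨ (l : ZMod 7) - k = 1))
    (hvH : ∀ k : Fin m, G.Adj v (x (i + k)) ↔ H.Adj (e 0) (e k.succ)) : ¬ Free G H := by
  have hinj : Function.Injective fun k : Fin m => x (i + k) := by
    intro k l hkl
    have hcast : ((k : ℕ) : ZMod 7) = (l : ℕ) := add_left_cancel (hx.1 hkl)
    rw [ZMod.natCast_eq_natCast_iff', Nat.mod_eq_of_lt (by omega),
      Nat.mod_eq_of_lt (by omega)] at hcast
    exact Fin.ext hcast
  refine not_free_of_embedding (Fin.cons v (fun k : Fin m => x (i + k)) ∘ e.symm)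
    ((Fin.cons_injective_iff.2 ⟨fun ⟨_, hk⟩ => hv ⟨_, hk⟩, hinj⟩).comp e.symm.injective)
    fun a b => ?_
  obtain ⟨a, rfl⟩ := e.surjective a
  obtain ⟨b, rfl⟩ := e.surjective b
  simp only [Function.comp_apply, Equiv.symm_apply_apply]
  induction a using Fin.cases <;> induction b using Fin.cases
  · simp
  · simpa using hvH _
  · simpa [G.adj_comm, H.adj_comm] using hvH _
  · simpa [hH] using hx.adj_add_iff i _ _

theorem IsHole7.adj_add_one_of_adj_of_adj_add_two (hx : IsHole7 G x) (hv : v ∉ Set.range x)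
    (h4 : Free G (cycG 4)) {i : ZMod 7} (h0 : G.Adj v (x i)) (h2 : G.Adj v (x (i + 2))) :
    G.Adj v (x (i + 1)) := by
  by_contra h1
  refine hx.not_free_of_cons hv i (m := 3) (by norm_num) (cycG 4) (ZMod.finEquiv 4).toEquiv
    (by decide) (fun k => ?_) h4
  fin_cases k <;> simp [h0, h1, h2] <;> decide

theorem IsHole7.adj_add_one_or_adj_add_two_of_adj_of_adj_add_three (hx : IsHole7 G x)
    (hv : v ∉ Set.range x) (h5 : Free G (cycG 5)) {i : ZMod 7} (h0 : G.Adj v (x i))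
    (h3 : G.Adj v (x (i + 3))) : G.Adj v (x (i + 1)) ∨ G.Adj v (x (i + 2)) := by
  by_contra! h12
  refine hx.not_free_of_cons hv i (m := 4) (by norm_num) (cycG 5) (ZMod.finEquiv 5).toEquiv
    (by decide) (fun k => ?_) h5
  fin_cases k <;> simp [h0, h12.1, h12.2, h3] <;> decide

theorem IsHole7.adj_next_five_of_adj (hx : IsHole7 G x) (hv : v ∉ Set.range x)
    (h7 : Free G (pathG 7)) {i : ZMod 7} (h0 : G.Adj v (x i)) :
    G.Adj v (x (i + 1)) ∨ G.Adj v (x (i + 2)) ∨ G.Adj v (x (i + 3)) ∨ G.Adj v (x (i + 4)) ∨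
      G.Adj v (x (i + 5)) := by
  by_contra! h
  refine hx.not_free_of_cons hv i (m := 6) (by norm_num) (pathG 7) (Equiv.refl _)
    (by decide) (fun k => ?_) h7
  fin_cases k <;> simp [h0, h] <;> decide

end NeighborsOnHole

section HolePatterns

set_option maxRecDepth 10000 in
set_option synthInstance.maxSize 2000 in
theorem hole_pattern_cases : ∀ b : ZMod 7 → Bool,
    (∀ i, b i → b (i + 2) → b (i + 1)) →
    (∀ i, b i → b (i + 3) → b (i + 1) ∨ b (i + 2)) →
    (∀ i, b i → b (i + 1) ∨ b (i + 2) ∨ b (i + 3) ∨ b (i + 4) ∨ b (i + 5)) →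
    (∀ i, b i) ∨ (∀ i, ¬ b i) ∨ (∃ i, ∀ j, b j ↔ (j = i - 1 ∨ j = i ∨ j = i + 1)) ∨
      ∃ i, ∀ j, b j ↔ (j = i + 2 ∨ j = i + 3 ∨ j = i - 3 ∨ j = i - 2) := by
  decide

set_option maxRecDepth 10000 in
set_option synthInstance.maxSize 2000 in
theorem hole_pattern_exclusive : ∀ b : ZMod 7 → Bool,
    let ca := ∀ i, b i
    let cb := ∀ i, ¬ b i
    let cc := ∃ i, ∀ j, b j ↔ (j = i - 1 ∨ j = i ∨ j = i + 1)
    let cd := ∃ i, ∀ j, b j ↔ (j = i + 2 ∨ j = i + 3 ∨ j = i - 3 ∨ j = i - 2)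
    ¬(ca ∧ cb) ∧ ¬(ca ∧ cc) ∧ ¬(ca ∧ cd) ∧ ¬(cb ∧ cc) ∧ ¬(cb ∧ cd) ∧ ¬(cc ∧ cd) := by
  decide

theorem hole_pattern_exactly_one (p : ZMod 7 → Prop) (h4 : ∀ i, p i → p (i + 2) → p (i + 1))
    (h5 : ∀ i, p i → p (i + 3) → p (i + 1) ∨ p (i + 2))
    (h7 : ∀ i, p i → p (i + 1) ∨ p (i + 2) ∨ p (i + 3) ∨ p (i + 4) ∨ p (i + 5)) :
    let ca := ∀ i, p i
    let cb := ∀ i, ¬ p i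
    let cc := ∃ i, ∀ j, p j ↔ (j = i - 1 ∨ j = i ∨ j = i + 1)
    let cd := ∃ i, ∀ j, p j ↔ (j = i + 2 ∨ j = i + 3 ∨ j = i - 3 ∨ j = i - 2)
    (ca ∨ cb ∨ cc ∨ cd) ∧
      ¬(ca ∧ cb) ∧ ¬(ca ∧ cc) ∧ ¬(ca ∧ cd) ∧ ¬(cb ∧ cc) ∧ ¬(cb ∧ cd) ∧ ¬(cc ∧ cd) := by
  classical
  have hcases := hole_pattern_cases (fun i => decide (p i))
    (by simpa using h4) (by simpa using h5) (by simpa using h7)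
  have hexclusive := hole_pattern_exclusive fun i => decide (p i)
  simp only [decide_eq_true_eq] at hcases hexclusive
  exact ⟨hcases, hexclusive⟩

end HolePatterns

end Paper

open Paper

theorem statement_9_general {V : Type*} (G : SimpleGraph V)
    (h7 : Paper.Free G (pathG 7)) (h4 : Paper.Free G (cycG 4)) (h5 : Paper.Free G (cycG 5))
    (x : ZMod 7 → V) (hx : IsHole7 G x) (v : V) (hv : v ∉ Set.range x) :
    let ca := ∀ i : ZMod 7, G.Adj v (x i)
    let cb := ∀ i : ZMod 7, ¬ G.Adj v (x i)
    let cc := ∃ i : ZMod 7, ∀ j : ZMod 7,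
      G.Adj v (x j) ↔ (j = i - 1 ∨ j = i ∨ j = i + 1)
    let cd := ∃ i : ZMod 7, ∀ j : ZMod 7,
      G.Adj v (x j) ↔ (j = i + 2 ∨ j = i + 3 ∨ j = i - 3 ∨ j = i - 2)
    (ca ∨ cb ∨ cc ∨ cd) ∧
      ¬(ca ∧ cb) ∧ ¬(ca ∧ cc) ∧ ¬(ca ∧ cd) ∧ ¬(cb ∧ cc) ∧ ¬(cb ∧ cd) ∧ ¬(cc ∧ cd) :=
  hole_pattern_exactly_one (fun j => G.Adj v (x j))
    (fun _ => hx.adj_add_one_of_adj_of_adj_add_two hv h4)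
    (fun _ => hx.adj_add_one_or_adj_add_two_of_adj_of_adj_add_three hv h5)
    (fun _ => hx.adj_next_five_of_adj hv h7)

theorem statement_9 {V : Type*} [Fintype V] [Nonempty V] (G : SimpleGraph V)
    (h7 : Paper.Free G (pathG 7)) (h4 : Paper.Free G (cycG 4)) (h5 : Paper.Free G (cycG 5))
    (x : ZMod 7 → V) (hx : IsHole7 G x) (v : V) (hv : v ∉ Set.range x) :
    let ca := ∀ i : ZMod 7, G.Adj v (x i)
    let cb := ∀ i : ZMod 7, ¬ G.Adj v (x i)
    let cc := ∃ i : ZMod 7, ∀ j : ZMod 7,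
      G.Adj v (x j) ↔ (j = i - 1 ∨ j = i ∨ j = i + 1)
    let cd := ∃ i : ZMod 7, ∀ j : ZMod 7,
      G.Adj v (x j) ↔ (j = i + 2 ∨ j = i + 3 ∨ j = i - 3 ∨ j = i - 2)
    (ca ∨ cb ∨ cc ∨ cd) ∧
      ¬(ca ∧ cb) ∧ ¬(ca ∧ cc) ∧ ¬(ca ∧ cd) ∧ ¬(cb ∧ cc) ∧ ¬(cb ∧ cd) ∧ ¬(cc ∧ cd) :=
  statement_9_general G h7 h4 h5 x hx v hv
end

section
/- Let B be a 7-bracelet with good pair ({A_i}_{i∈ℤ7}, i*). Then B contains a 7-hole. Furthermore, every 7-hole H in B satisfies: |V(H) ∩ A_i| = 1 for all i ∈ ℤ7, and H is of the form H = x_0, x_1, ..., x_6, x_0 (indices in ℤ7), where for each i ∈ ℤ7, x_i is the unique vertex of V(H) ∩ A_i. -/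
open SimpleGraph

open Paper

abbrev Mset7 (d : ZMod 7) : Prop := d = 0 ∨ d = 1 ∨ d = 2 ∨ d = 5 ∨ d = 6
abbrev Sset7 (d : ZMod 7) : Prop := d = 2 ∨ d = 3 ∨ d = 4 ∨ d = 5

set_option synthInstance.maxSize 5000 in
set_option synthInstance.maxHeartbeats 2000000 in
set_option maxRecDepth 10000 in
set_option maxHeartbeats 2000000 in
lemma core7 : ∀ a0 a1 : ZMod 7, Mset7 (a1 - a0) → ∀ a2, Mset7 (a2 - a1) → Sset7 (a2 - a0) →
    ∀ a3, Mset7 (a3 - a2) → Sset7 (a3 - a1) → Sset7 (a3 - a0) →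
    ∀ a4, Mset7 (a4 - a3) → Sset7 (a4 - a2) → Sset7 (a4 - a1) →
    ∀ a5, Mset7 (a5 - a4) → Sset7 (a5 - a3) → Sset7 (a5 - a2) →
    ∀ a6, Mset7 (a6 - a5) → Mset7 (a0 - a6) → Sset7 (a6 - a4) → Sset7 (a0 - a5) →
    Sset7 (a1 - a6) → Sset7 (a6 - a3) → Sset7 (a0 - a4) → Sset7 (a1 - a5) → Sset7 (a2 - a6) →
    ((a1 = a0 + 1 ∧ a2 = a0 + 2 ∧ a3 = a0 + 3 ∧ a4 = a0 + 4 ∧ a5 = a0 + 5 ∧ a6 = a0 + 6) ∨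
     (a1 = a0 + 6 ∧ a2 = a0 + 5 ∧ a3 = a0 + 4 ∧ a4 = a0 + 3 ∧ a5 = a0 + 2 ∧ a6 = a0 + 1)) := by
  decide

lemma zmod7_cases : ∀ j : ZMod 7, j = 0 ∨ j = 1 ∨ j = 2 ∨ j = 3 ∨ j = 4 ∨ j = 5 ∨ j = 6 := by
  decide

lemma zmem7 : ∀ d : ZMod 7, d ≠ 3 → d ≠ 4 → Mset7 d := by decide

lemma zs27 : ∀ d : ZMod 7, d ≠ 0 → d ≠ 1 → d ≠ 6 → Sset7 d := by decide

lemma shift7 (i : ZMod 7) {c d : ZMod 7} (h : c = d) : i + c = i + d := by rw [h]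

theorem statement_10 {V : Type*} [Fintype V] (B : SimpleGraph V)
    (A : ZMod 7 → Set V) (istar : ZMod 7)
    (h : IsGoodPairOn B Set.univ A istar) :
    (∃ x : ZMod 7 → V, IsHole7 B x) ∧
    (∀ x : ZMod 7 → V, IsHole7 B x →
      (∀ i : ZMod 7, ∃! v : V, v ∈ Set.range x ∩ A i) ∧
      ∃ y : ZMod 7 → V, IsHole7 B y ∧ Set.range y = Set.range x ∧ ∀ i, y i ∈ A i) := by
  classical
  obtain ⟨hU, hdis, hI, hPart, -, -, hf, hP3m, hM3m, hP3p, hM3p, -, -, -, -⟩ := h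
  -- vertices of an `A i` with empty plus/minus parts are anticomplete to `A (i±2)`
  have star_all : ∀ i : ZMod 7, braceletPlus B A i = ∅ → braceletMinus B A i = ∅ →
      ∀ v ∈ A i, ∀ w ∈ A (i - 2) ∪ A (i + 2), ¬ B.Adj v w := by
    intro i hp hm v hv
    rw [hPart i, hp, hm, Set.union_empty, Set.union_empty] at hv
    exact hv.2
  -- a transversal with the right nonadjacencies is a 7-hole
  have mk_hole : ∀ y : ZMod 7 → V, (∀ i, y i ∈ A i) →
      (∀ i, ¬ B.Adj (y i) (y (i + 2))) → IsHole7 B y := by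
    intro y hy hnon
    constructor
    · intro i j hxy
      by_contra hne
      exact Set.disjoint_left.mp (hdis i j hne) (hy i) (by rw [hxy]; exact hy j)
    · intro i j
      rcases zmod7_cases (i - j) with hk | hk | hk | hk | hk | hk | hk
      · have hij : i = j := sub_eq_zero.mp hk
        subst hij
        exact iff_of_false (B.irrefl) (by rw [sub_self]; decide)
      · have hi : i = j + 1 := by rw [← hk]; ring
        subst hi
        exact iff_of_true
          (((hI j).2.2.1 (y j) (hy j) (y (j + 1)) (Set.mem_union_right _ (hy (j + 1)))).symm)
          (Or.inl (by ring))
      · have hi : i = j + 2 := by rw [← hk]; ring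
        subst hi
        refine iff_of_false (fun had => hnon j had.symm) ?_
        rw [show j + 2 - j = (2 : ZMod 7) from by ring,
          show j - (j + 2) = (-(2 : ZMod 7)) from by ring]
        decide
      · have hi : i = j + 3 := by rw [← hk]; ring
        subst hi
        refine iff_of_false
          (fun had => (hI j).2.2.2 (y j) (hy j) (y (j + 3))
            (Set.mem_union_right _ (hy (j + 3))) had.symm) ?_
        rw [show j + 3 - j = (3 : ZMod 7) from by ring,
          show j - (j + 3) = (-(3 : ZMod 7)) from by ring]
        decide
      · have hi : i = j + 4 := by rw [← hk]; ring
        subst hi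
        have e : j + 4 = j - 3 := by
          rw [sub_eq_add_neg]; exact shift7 j (by decide)
        refine iff_of_false
          (fun had => (hI j).2.2.2 (y j) (hy j) (y (j + 4))
            (Set.mem_union_left _ (by rw [← e]; exact hy (j + 4))) had.symm) ?_
        rw [show j + 4 - j = (4 : ZMod 7) from by ring,
          show j - (j + 4) = (-(4 : ZMod 7)) from by ring]
        decide
      · have hi : i = j + 5 := by rw [← hk]; ring
        subst hi
        have e : j + 5 + 2 = j := by
          rw [add_assoc, show ((5 : ZMod 7) + 2) = 0 from by decide, add_zero]
        refine iff_of_false (fun had => hnon (j + 5) (by rw [e]; exact had)) ?_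
        rw [show j + 5 - j = (5 : ZMod 7) from by ring,
          show j - (j + 5) = (-(5 : ZMod 7)) from by ring]
        decide
      · have hi : i = j + 6 := by rw [← hk]; ring
        subst hi
        have e : j + 6 = j - 1 := by
          rw [sub_eq_add_neg]; exact shift7 j (by decide)
        refine iff_of_true
          (((hI j).2.2.1 (y j) (hy j) (y (j + 6))
            (Set.mem_union_left _ (by rw [← e]; exact hy (j + 6)))).symm) ?_
        refine Or.inr ?_
        rw [show j - (j + 6) = (-(6 : ZMod 7)) from by ring]
        decide
  constructor
  · -- existence of a 7-hole
    obtain ⟨v0, hv0, ⟨wm, hwm, hnm⟩, wp, hwp, hnp⟩ := hf istar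
    obtain ⟨v1, hv1, -, w1, hw1, hn1⟩ := hf (istar - 1)
    obtain ⟨a3, ha3⟩ := (hI (istar + 3)).1
    obtain ⟨a4, ha4'⟩ := (hI (istar - 3)).1
    have em2 : istar + 5 = istar - 2 := by rw [sub_eq_add_neg]; exact shift7 istar (by decide)
    have em1 : istar + 6 = istar - 1 := by rw [sub_eq_add_neg]; exact shift7 istar (by decide)
    have em3 : istar + 4 = istar - 3 := by rw [sub_eq_add_neg]; exact shift7 istar (by decide)
    have hwm' : wm ∈ A (istar + 5) := by rw [em2]; exact hwm
    have hv1' : v1 ∈ A (istar + 6) := by rw [em1]; exact hv1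
    have ha4 : a4 ∈ A (istar + 4) := by rw [em3]; exact ha4'
    have hw1' : w1 ∈ A (istar + 1) := by
      rw [show istar + 1 = istar - 1 + 2 from by ring]; exact hw1
    have S3p : ∀ v ∈ A (istar + 3), ∀ w ∈ A (istar + 3 - 2) ∪ A (istar + 3 + 2), ¬ B.Adj v w :=
      star_all (istar + 3) hP3p hM3p
    have S3m : ∀ v ∈ A (istar + 4), ∀ w ∈ A (istar + 4 - 2) ∪ A (istar + 4 + 2), ¬ B.Adj v w :=
      star_all (istar + 4) (by rw [em3]; exact hP3m) (by rw [em3]; exact hM3m)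
    refine ⟨fun i => if i - istar = 0 then v0 else if i - istar = 1 then w1
      else if i - istar = 2 then wp else if i - istar = 3 then a3
      else if i - istar = 4 then a4 else if i - istar = 5 then wm else v1,
      mk_hole _ ?_ ?_⟩
    · intro i
      have hi : i = istar + (i - istar) := by ring
      rcases zmod7_cases (i - istar) with hk | hk | hk | hk | hk | hk | hk <;>
        rw [hk] at hi <;> rw [hk]
      · rw [if_pos rfl, hi, add_zero]; exact hv0
      · rw [if_neg (by decide), if_pos rfl, hi]; exact hw1'
      · rw [if_neg (by decide), if_neg (by decide), if_pos rfl, hi]; exact hwp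
      · rw [if_neg (by decide), if_neg (by decide), if_neg (by decide), if_pos rfl, hi]
        exact ha3
      · rw [if_neg (by decide), if_neg (by decide), if_neg (by decide), if_neg (by decide),
          if_pos rfl, hi]
        exact ha4
      · rw [if_neg (by decide), if_neg (by decide), if_neg (by decide), if_neg (by decide),
          if_neg (by decide), if_pos rfl, hi]
        exact hwm'
      · rw [if_neg (by decide), if_neg (by decide), if_neg (by decide), if_neg (by decide),
          if_neg (by decide), if_neg (by decide), hi]
        exact hv1'
    · intro i
      have hk2 : i + 2 - istar = (i - istar) + 2 := by ring
      rcases zmod7_cases (i - istar) with hk | hk | hk | hk | hk | hk | hk <;>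
        rw [hk] at hk2 <;> rw [hk, hk2]
      · rw [if_pos rfl, show ((0 : ZMod 7) + 2) = 2 from by decide,
          if_neg (by decide), if_neg (by decide), if_pos rfl]
        exact hnp
      · rw [if_neg (by decide), if_pos rfl, show ((1 : ZMod 7) + 2) = 3 from by decide,
          if_neg (by decide), if_neg (by decide), if_neg (by decide), if_pos rfl]
        intro had
        exact S3p a3 ha3 w1
          (Set.mem_union_left _
            (by rw [show istar + 3 - 2 = istar + 1 from by ring]; exact hw1')) had.symm
      · rw [if_neg (by decide), if_neg (by decide), if_pos rfl,
          show ((2 : ZMod 7) + 2) = 4 from by decide, if_neg (by decide), if_neg (by decide),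
          if_neg (by decide), if_neg (by decide), if_pos rfl]
        intro had
        exact S3m a4 ha4 wp
          (Set.mem_union_left _
            (by rw [show istar + 4 - 2 = istar + 2 from by ring]; exact hwp)) had.symm
      · rw [if_neg (by decide), if_neg (by decide), if_neg (by decide), if_pos rfl,
          show ((3 : ZMod 7) + 2) = 5 from by decide, if_neg (by decide), if_neg (by decide),
          if_neg (by decide), if_neg (by decide), if_neg (by decide), if_pos rfl]
        exact S3p a3 ha3 wm
          (Set.mem_union_right _
            (by rw [show istar + 3 + 2 = istar + 5 from by ring]; exact hwm'))
      · rw [if_neg (by decide), if_neg (by decide), if_neg (by decide), if_neg (by decide),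
          if_pos rfl, show ((4 : ZMod 7) + 2) = 6 from by decide, if_neg (by decide),
          if_neg (by decide), if_neg (by decide), if_neg (by decide), if_neg (by decide),
          if_neg (by decide)]
        exact S3m a4 ha4 v1
          (Set.mem_union_right _
            (by rw [show istar + 4 + 2 = istar + 6 from by ring]; exact hv1'))
      · rw [if_neg (by decide), if_neg (by decide), if_neg (by decide), if_neg (by decide),
          if_neg (by decide), if_pos rfl, show ((5 : ZMod 7) + 2) = 0 from by decide,
          if_pos rfl]
        exact fun had => hnm had.symm
      · rw [if_neg (by decide), if_neg (by decide), if_neg (by decide), if_neg (by decide),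
          if_neg (by decide), if_neg (by decide), show ((6 : ZMod 7) + 2) = 1 from by decide,
          if_neg (by decide), if_pos rfl]
        exact hn1
  · -- every 7-hole is a transversal traversed in order
    intro x hx
    have hex : ∀ j : ZMod 7, ∃ i, x j ∈ A i := by
      intro j
      have hx' : x j ∈ ⋃ i, A i := by rw [hU]; exact Set.mem_univ _
      exact Set.mem_iUnion.mp hx'
    choose f pos using hex
    have funiq : ∀ j i, x j ∈ A i → f j = i := by
      intro j i hji
      by_contra hne
      exact Set.disjoint_left.mp (hdis _ _ hne) (pos j) hji
    have hole_adj : ∀ j : ZMod 7, B.Adj (x j) (x (j + 1)) := fun j =>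
      ((hx.2 (j + 1) j).mpr (Or.inl (by ring))).symm
    have hole_nonadj : ∀ j k : ZMod 7, j - k ≠ 1 → k - j ≠ 1 → ¬ B.Adj (x j) (x k) := by
      intro j k h1 h2 had
      rcases (hx.2 j k).mp had with hh | hh
      exacts [h1 hh, h2 hh]
    have hadjx : ∀ c c' : ZMod 7, c + 1 = c' → B.Adj (x c) (x c') := by
      intro c c' e
      rw [← e]; exact hole_adj c
    have Mstep : ∀ j k : ZMod 7, B.Adj (x j) (x k) → Mset7 (f k - f j) := by
      intro j k had
      refine zmem7 _ (fun e => ?_) (fun e => ?_)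
      · rw [sub_eq_iff_eq_add] at e
        have e3 : f j + 3 = f k := by rw [e, add_comm]
        exact (hI (f j)).2.2.2 (x j) (pos j) (x k)
          (Set.mem_union_right _ (by rw [e3]; exact pos k)) had
      · rw [sub_eq_iff_eq_add] at e
        have e4 : f j - 3 = f k := by
          rw [e, sub_eq_add_neg, show (-3 : ZMod 7) = 4 from by decide, add_comm]
        exact (hI (f j)).2.2.2 (x j) (pos j) (x k)
          (Set.mem_union_left _ (by rw [e4]; exact pos k)) had
    have Sgap : ∀ j k : ZMod 7, j ≠ k → j - k ≠ 1 → k - j ≠ 1 → Sset7 (f k - f j) := by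
      intro j k hjk h1 h2
      have hnadj := hole_nonadj j k h1 h2
      refine zs27 _ (fun e => ?_) (fun e => ?_) (fun e => ?_)
      · have e' : f k = f j := sub_eq_zero.mp e
        exact hnadj ((hI (f j)).2.1 (pos j) (by rw [← e']; exact pos k)
          (fun hxx => hjk (hx.1 hxx)))
      · rw [sub_eq_iff_eq_add] at e
        have e5 : f j + 1 = f k := by rw [e, add_comm]
        exact hnadj ((hI (f j)).2.2.1 (x j) (pos j) (x k)
          (Set.mem_union_right _ (by rw [e5]; exact pos k)))
      · rw [sub_eq_iff_eq_add] at e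
        have e6 : f j - 1 = f k := by
          rw [e, sub_eq_add_neg, show (-1 : ZMod 7) = 6 from by decide, add_comm]
        exact hnadj ((hI (f j)).2.2.1 (x j) (pos j) (x k)
          (Set.mem_union_left _ (by rw [e6]; exact pos k)))
    have finish : ∀ τ : ZMod 7 → ZMod 7, (∀ i, f (τ i) = i) → (∀ j, τ (f j) = j) →
        (∀ i, τ i - τ (i + 2) ≠ 1 ∧ τ (i + 2) - τ i ≠ 1) →
        (∀ i : ZMod 7, ∃! v : V, v ∈ Set.range x ∩ A i) ∧
        ∃ y : ZMod 7 → V, IsHole7 B y ∧ Set.range y = Set.range x ∧ ∀ i, y i ∈ A i := by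
      intro τ P1 P2 hd
      have hyA : ∀ i, x (τ i) ∈ A i := by
        intro i
        have := pos (τ i)
        rwa [P1 i] at this
      have hynon : ∀ i, ¬ B.Adj (x (τ i)) (x (τ (i + 2))) := fun i =>
        hole_nonadj _ _ (hd i).1 (hd i).2
      have hhole : IsHole7 B (fun i => x (τ i)) := mk_hole _ hyA hynon
      constructor
      · intro i
        refine ⟨x (τ i), ⟨⟨τ i, rfl⟩, hyA i⟩, ?_⟩
        rintro v ⟨⟨j, rfl⟩, hvA⟩
        have hj : f j = i := funiq j i hvA
        rw [← hj, P2 j]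
      · refine ⟨fun i => x (τ i), hhole, ?_, hyA⟩
        ext v
        constructor
        · rintro ⟨i, rfl⟩
          exact ⟨τ i, rfl⟩
        · rintro ⟨j, rfl⟩
          refine ⟨f j, ?_⟩
          show x (τ (f j)) = x j
          rw [P2 j]
    rcases core7 (f 0) (f 1) (Mstep 0 1 (hadjx 0 1 (by decide)))
      (f 2) (Mstep 1 2 (hadjx 1 2 (by decide)))
      (Sgap 0 2 (by decide) (by decide) (by decide))
      (f 3) (Mstep 2 3 (hadjx 2 3 (by decide)))
      (Sgap 1 3 (by decide) (by decide) (by decide))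
      (Sgap 0 3 (by decide) (by decide) (by decide))
      (f 4) (Mstep 3 4 (hadjx 3 4 (by decide)))
      (Sgap 2 4 (by decide) (by decide) (by decide))
      (Sgap 1 4 (by decide) (by decide) (by decide))
      (f 5) (Mstep 4 5 (hadjx 4 5 (by decide)))
      (Sgap 3 5 (by decide) (by decide) (by decide))
      (Sgap 2 5 (by decide) (by decide) (by decide))
      (f 6) (Mstep 5 6 (hadjx 5 6 (by decide)))
      (Mstep 6 0 (hadjx 6 0 (by decide)))
      (Sgap 4 6 (by decide) (by decide) (by decide))
      (Sgap 5 0 (by decide) (by decide) (by decide))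
      (Sgap 6 1 (by decide) (by decide) (by decide))
      (Sgap 3 6 (by decide) (by decide) (by decide))
      (Sgap 4 0 (by decide) (by decide) (by decide))
      (Sgap 5 1 (by decide) (by decide) (by decide))
      (Sgap 6 2 (by decide) (by decide) (by decide))
      with ⟨e1, e2, e3, e4, e5, e6⟩ | ⟨e1, e2, e3, e4, e5, e6⟩
    · have hfall : ∀ j : ZMod 7, f j = f 0 + j := by
        intro j
        rcases zmod7_cases j with rfl | rfl | rfl | rfl | rfl | rfl | rfl
        · rw [add_zero]
        exacts [e1, e2, e3, e4, e5, e6]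
      refine finish (fun i => i - f 0) (fun i => ?_) (fun j => ?_) (fun i => ⟨?_, ?_⟩)
      · show f (i - f 0) = i
        rw [hfall (i - f 0)]; ring
      · show f j - f 0 = j
        rw [hfall j]; ring
      · show (i - f 0) - (i + 2 - f 0) ≠ 1
        rw [show (i - f 0) - (i + 2 - f 0) = (-(2 : ZMod 7)) from by ring]
        decide
      · show (i + 2 - f 0) - (i - f 0) ≠ 1
        rw [show (i + 2 - f 0) - (i - f 0) = (2 : ZMod 7) from by ring]
        decide
    · have hfall : ∀ j : ZMod 7, f j = f 0 - j := by
        intro j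
        rcases zmod7_cases j with rfl | rfl | rfl | rfl | rfl | rfl | rfl
        · rw [sub_zero]
        · rw [e1, sub_eq_add_neg]; exact shift7 _ (by decide)
        · rw [e2, sub_eq_add_neg]; exact shift7 _ (by decide)
        · rw [e3, sub_eq_add_neg]; exact shift7 _ (by decide)
        · rw [e4, sub_eq_add_neg]; exact shift7 _ (by decide)
        · rw [e5, sub_eq_add_neg]; exact shift7 _ (by decide)
        · rw [e6, sub_eq_add_neg]; exact shift7 _ (by decide)
      refine finish (fun i => f 0 - i) (fun i => ?_) (fun j => ?_) (fun i => ⟨?_, ?_⟩)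
      · show f (f 0 - i) = i
        rw [hfall (f 0 - i)]; ring
      · show f 0 - f j = j
        rw [hfall j]; ring
      · show (f 0 - i) - (f 0 - (i + 2)) ≠ 1
        rw [show (f 0 - i) - (f 0 - (i + 2)) = (2 : ZMod 7) from by ring]
        decide
      · show (f 0 - (i + 2)) - (f 0 - i) ≠ 1
        rw [show (f 0 - (i + 2)) - (f 0 - i) = (-(2 : ZMod 7)) from by ring]
        decide
end

section
/- Let B be a quasi-7-bracelet with good partition {A_i}_{i∈ℤ7}, and assume that B is (P_7, C_4, C_5)-free. Then there exists an index i* ∈ ℤ7 such that B is a 7-bracelet with good pair ({A_i}_{i∈ℤ7}, i*). -/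
open SimpleGraph

open Paper

/-!
A vertex `v ∈ A i` with neighbours `u ∈ A (i - 2)` and `w ∈ A (i + 2)` is impossible: together
with `x ∈ A (i + 3)` and `y ∈ A (i - 3)` it closes a `C₄` (if `x ∼ u` or `y ∼ w`) or the `C₅`
`v w x y u`. Hence every `A i` splits into `A_i^*, A_i^+, A_i^-`. Similarly, edges between
`A i, A (i + 2)` and between `A (i + 3), A (i + 5)` close a `C₅` through `A (i - 1)`; so the indices
`i` with an edge between `A i` and `A (i + 2)` contain no two at distance `3`, which forces four
consecutive indices `t + 1, …, t + 4` without such an edge, and `t` is a good index.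
Two vertices of `A_i^+` (or of `A_i^-`) differ in their neighbourhoods only inside one clique
`A (i ± 2)`, so incomparable closed neighbourhoods would give a `C₄`.
-/

set_option maxRecDepth 4000 in
theorem exists_four_consecutive_not (P : ZMod 7 → Prop) (hP : ∀ i, P i → ¬ P (i + 3)) :
    ∃ t, ∀ j, j = t + 1 ∨ j = t + 2 ∨ j = t + 3 ∨ j = t + 4 → ¬ P j := by
  classical
  have key : ∀ f : ZMod 7 → Bool, (∀ i, f i → f (i + 3) = false) →
      ∃ t, f (t + 1) = false ∧ f (t + 2) = false ∧ f (t + 3) = false ∧ f (t + 4) = false := by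
    decide
  obtain ⟨t, ht⟩ := key (fun i => decide (P i)) (by simpa using hP)
  simp only [decide_eq_false_iff_not] at ht
  exact ⟨t, by rintro j (rfl | rfl | rfl | rfl) <;> simp only [ht, not_false_eq_true]⟩

namespace Paper

variable {V : Type*} {G : SimpleGraph V}

theorem cycG_adj {n : ℕ} {i j : ZMod n} :
    (cycG n).Adj i j ↔ i ≠ j ∧ (i + 1 = j ∨ j + 1 = i) :=
  fromRel_adj _ _ _

theorem Free.false_of_induced {W : Type*} {H : SimpleGraph W} (hH : Free G H) (f : W → V)
    (hf : Function.Injective f) (hadj : ∀ a b, G.Adj (f a) (f b) ↔ H.Adj a b) : False :=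
  hH ⟨⟨f, hf⟩, fun _ => Set.mem_univ _, hadj⟩

theorem Free.false_of_c4 (h4 : Free G (cycG 4)) {a b c d : V}
    (hab : G.Adj a b) (hbc : G.Adj b c) (hcd : G.Adj c d) (hda : G.Adj d a)
    (hac : ¬ G.Adj a c) (hbd : ¬ G.Adj b d) (hac' : a ≠ c) (hbd' : b ≠ d) : False := by
  have cases : ∀ k : ZMod 4, k = 0 ∨ k = 1 ∨ k = 2 ∨ k = 3 := by decide
  refine h4.false_of_induced ![a, b, c, d] (fun i j h => ?_) (fun i j => ?_) <;>
  rcases cases i with rfl | rfl | rfl | rfl <;> rcases cases j with rfl | rfl | rfl | rfl <;>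
    simp_all [cycG_adj, G.adj_comm, hab.ne, hbc.ne, hcd.ne, hda.ne, hab.ne', hbc.ne', hcd.ne',
      hda.ne', eq_comm] <;> decide

theorem Free.false_of_c5 (h5 : Free G (cycG 5)) {a b c d e : V}
    (hab : G.Adj a b) (hbc : G.Adj b c) (hcd : G.Adj c d) (hde : G.Adj d e) (hea : G.Adj e a)
    (hac : ¬ G.Adj a c) (had : ¬ G.Adj a d) (hbd : ¬ G.Adj b d) (hbe : ¬ G.Adj b e)
    (hce : ¬ G.Adj c e) : False := by
  have hac' : a ≠ c := fun h => had (h ▸ hcd)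
  have had' : a ≠ d := fun h => hbd (h ▸ hab.symm)
  have hbd' : b ≠ d := fun h => had (h ▸ hab)
  have hbe' : b ≠ e := fun h => hbd (h ▸ hde.symm)
  have hce' : c ≠ e := fun h => hac (h ▸ hea.symm)
  have cases : ∀ k : ZMod 5, k = 0 ∨ k = 1 ∨ k = 2 ∨ k = 3 ∨ k = 4 := by decide
  refine h5.false_of_induced ![a, b, c, d, e] (fun i j h => ?_) (fun i j => ?_) <;>
  rcases cases i with rfl | rfl | rfl | rfl | rfl <;>
  rcases cases j with rfl | rfl | rfl | rfl | rfl <;>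
    simp_all [cycG_adj, G.adj_comm, hab.ne, hbc.ne, hcd.ne, hde.ne, hea.ne, hab.ne', hbc.ne',
      hcd.ne', hde.ne', hea.ne', eq_comm] <;> decide

theorem Free.cnbr_subset_total_of_private_mem_clique (h4 : Free G (cycG 4)) (S : Set V)
    {K : Set V} (hK : G.IsClique K) {u v : V} (huv : G.Adj u v)
    (hu : ∀ x, G.Adj u x → ¬ G.Adj v x → x ≠ v → x ∈ K)
    (hv : ∀ x, G.Adj v x → ¬ G.Adj u x → x ≠ u → x ∈ K) :
    cnbr G S u ⊆ cnbr G S v ∨ cnbr G S v ⊆ cnbr G S u := by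
  by_contra! h
  obtain ⟨⟨p, hpu, hpv⟩, ⟨q, hqv, hqu⟩⟩ := And.imp Set.not_subset.1 Set.not_subset.1 h
  simp only [cnbr, Set.mem_ofPred_eq, not_and, not_or] at hpu hpv hqv hqu
  obtain ⟨hpv, hvp⟩ := hpv hpu.1
  obtain ⟨hqu, huq⟩ := hqu hqv.1
  have hup : G.Adj u p := hpu.2.resolve_left fun h => hvp (h ▸ huv.symm)
  have hvq : G.Adj v q := hqv.2.resolve_left fun h => huq (h ▸ huv)
  have hpq : G.Adj p q := hK (hu p hup hvp hpv) (hv q hvq huq hqu) fun h => huq (h ▸ hup)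
  exact h4.false_of_c4 hup hpq hvq.symm huv.symm huq (fun h => hvp h.symm) (Ne.symm hqu) hpv

def HasSkipEdge (G : SimpleGraph V) (A : ZMod 7 → Set V) (i : ZMod 7) : Prop :=
  ∃ u ∈ A i, ∃ w ∈ A (i + 2), G.Adj u w

theorem braceletPlus_eq_empty {A : ZMod 7 → Set V} {i : ZMod 7} (h : ¬ HasSkipEdge G A i) :
    braceletPlus G A i = ∅ :=
  Set.eq_empty_of_forall_notMem fun v hv => h ⟨v, hv.1, hv.2.2⟩

theorem braceletMinus_eq_empty {A : ZMod 7 → Set V} {i : ZMod 7}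
    (h : ¬ HasSkipEdge G A (i - 2)) : braceletMinus G A i = ∅ :=
  Set.eq_empty_of_forall_notMem fun v ⟨hv, _, w, hw, hvw⟩ =>
    h ⟨w, hw, v, by rwa [sub_add_cancel], hvw.symm⟩

namespace IsQuasiGoodPartitionOn

variable {A : ZMod 7 → Set V} {i j : ZMod 7} {u v w x : V}

theorem mem_cases (hq : IsQuasiGoodPartitionOn G Set.univ A) (i : ZMod 7) (x : V) :
    x ∈ A i ∨ x ∈ A (i + 1) ∨ x ∈ A (i - 1) ∨ x ∈ A (i + 2) ∨ x ∈ A (i - 2) ∨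
      x ∈ A (i + 3) ∨ x ∈ A (i - 3) := by
  obtain ⟨k, hk⟩ := Set.mem_iUnion.1 (hq.1.symm ▸ Set.mem_univ x)
  obtain ⟨d, rfl⟩ : ∃ d, k = i + d := ⟨k - i, by ring⟩
  have hd : ∀ d : ZMod 7, d = 0 ∨ d = 1 ∨ d = -1 ∨ d = 2 ∨ d = -2 ∨ d = 3 ∨ d = -3 := by decide
  rcases hd d with rfl | rfl | rfl | rfl | rfl | rfl | rfl <;> simp_all [← sub_eq_add_neg]

theorem nonempty (hq : IsQuasiGoodPartitionOn G Set.univ A) (i : ZMod 7) : (A i).Nonempty :=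
  (hq.2.2.1 i).1

theorem isClique (hq : IsQuasiGoodPartitionOn G Set.univ A) (i : ZMod 7) : G.IsClique (A i) :=
  (hq.2.2.1 i).2.1

theorem ne_of_mem (hq : IsQuasiGoodPartitionOn G Set.univ A) (hv : v ∈ A i) (hw : w ∈ A j)
    (hij : i ≠ j) : v ≠ w :=
  fun h => Set.disjoint_left.1 (hq.2.1 i j hij) hv (h ▸ hw)

theorem adj_of_mem_same (hq : IsQuasiGoodPartitionOn G Set.univ A) (hv : v ∈ A i)
    (hw : w ∈ A i) (hvw : v ≠ w) : G.Adj v w :=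
  hq.isClique i hv hw hvw

theorem adj_of_mem_consecutive (hq : IsQuasiGoodPartitionOn G Set.univ A) (hv : v ∈ A i)
    (hw : w ∈ A j) (hij : j = i + 1 ∨ j = i - 1) : G.Adj v w := by
  rcases hij with rfl | rfl
  exacts [(hq.2.2.1 i).2.2.1 v hv w (Or.inr hw), (hq.2.2.1 i).2.2.1 v hv w (Or.inl hw)]

theorem not_adj_of_mem_opposite (hq : IsQuasiGoodPartitionOn G Set.univ A) (hv : v ∈ A i)
    (hw : w ∈ A j) (hij : j = i + 3 ∨ j = i - 3) : ¬ G.Adj v w := by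
  rcases hij with rfl | rfl
  exacts [(hq.2.2.1 i).2.2.2 v hv w (Or.inr hw), (hq.2.2.1 i).2.2.2 v hv w (Or.inl hw)]

theorem not_adj_add_two_of_adj_sub_two (hq : IsQuasiGoodPartitionOn G Set.univ A)
    (h4 : Free G (cycG 4)) (h5 : Free G (cycG 5)) (hv : v ∈ A i) (hu : u ∈ A (i - 2))
    (hw : w ∈ A (i + 2)) (hvu : G.Adj v u) : ¬ G.Adj v w := by
  intro hvw
  obtain ⟨x, hx⟩ := hq.nonempty (i + 3)
  obtain ⟨y, hy⟩ := hq.nonempty (i - 3)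
  have hwx : G.Adj w x := hq.adj_of_mem_consecutive hw hx (by grind)
  have hxy : G.Adj x y := hq.adj_of_mem_consecutive hx hy (by grind)
  have hyu : G.Adj y u := hq.adj_of_mem_consecutive hy hu (by grind)
  have hvx : ¬ G.Adj v x := hq.not_adj_of_mem_opposite hv hx (by grind)
  have hvy : ¬ G.Adj v y := hq.not_adj_of_mem_opposite hv hy (by grind)
  have huw : ¬ G.Adj u w := hq.not_adj_of_mem_opposite hu hw (by grind)
  by_cases hxu : G.Adj x u
  · exact h4.false_of_c4 hvw hwx hxu hvu.symm hvx (fun h => huw h.symm)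
      (hq.ne_of_mem hv hx (by grind)) (hq.ne_of_mem hw hu (by grind))
  by_cases hyw : G.Adj y w
  · exact h4.false_of_c4 hvu hyu.symm hyw hvw.symm hvy huw
      (hq.ne_of_mem hv hy (by grind)) (hq.ne_of_mem hu hw (by grind))
  exact h5.false_of_c5 hvw hwx hxy hyu hvu.symm hvx hvy (fun h => hyw h.symm)
    (fun h => huw h.symm) hxu

theorem not_hasSkipEdge_add_three (hq : IsQuasiGoodPartitionOn G Set.univ A)
    (h4 : Free G (cycG 4)) (h5 : Free G (cycG 5)) (h : HasSkipEdge G A i) :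
    ¬ HasSkipEdge G A (i + 3) := by
  rintro ⟨p, hp, r, hr, hpr⟩
  obtain ⟨u, hu, w, hw, huw⟩ := h
  obtain ⟨b, hb⟩ := hq.nonempty (i - 1)
  have hr' : r ∈ A (i - 2) := by convert hr using 2; grind
  exact h5.false_of_c5 huw (hq.adj_of_mem_consecutive hw hp (by grind)) hpr
    (hq.adj_of_mem_consecutive hr hb (by grind)) (hq.adj_of_mem_consecutive hb hu (by grind))
    (hq.not_adj_of_mem_opposite hu hp (by grind))
    (fun hur => hq.not_adj_add_two_of_adj_sub_two h4 h5 hu hr' hw hur huw)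
    (hq.not_adj_of_mem_opposite hw hr (by grind)) (hq.not_adj_of_mem_opposite hw hb (by grind))
    (hq.not_adj_of_mem_opposite hp hb (by grind))

theorem eq_braceletStar_union_braceletPlus_union_braceletMinus
    (hq : IsQuasiGoodPartitionOn G Set.univ A) (h4 : Free G (cycG 4)) (h5 : Free G (cycG 5))
    (i : ZMod 7) : A i = braceletStar G A i ∪ braceletPlus G A i ∪ braceletMinus G A i := by
  ext v
  refine ⟨fun hv => ?_, by rintro ((h | h) | h) <;> exact h.1⟩
  by_cases hm : ∃ u ∈ A (i - 2), G.Adj v u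
  · obtain ⟨u, hu, hvu⟩ := hm
    exact Or.inr ⟨hv, fun w hw => hq.not_adj_add_two_of_adj_sub_two h4 h5 hv hu hw hvu, u, hu, hvu⟩
  by_cases hp : ∃ w ∈ A (i + 2), G.Adj v w
  · exact Or.inl (Or.inr ⟨hv, fun u hu hvu => hm ⟨u, hu, hvu⟩, hp⟩)
  push Not at hm hp
  exact Or.inl (Or.inl ⟨hv, fun w hw => hw.elim (hm w) (hp w)⟩)

theorem mem_add_two_or_sub_two_of_adj_of_not_adj (hq : IsQuasiGoodPartitionOn G Set.univ A)
    (hu : u ∈ A i) (hv : v ∈ A i) (hux : G.Adj u x) (hvx : ¬ G.Adj v x) (hxv : x ≠ v) :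
    x ∈ A (i + 2) ∨ x ∈ A (i - 2) := by
  rcases hq.mem_cases i x with hx | hx | hx | hx | hx | hx | hx
  · exact absurd (hq.adj_of_mem_same hv hx (Ne.symm hxv)) hvx
  · exact absurd (hq.adj_of_mem_consecutive hv hx (by grind)) hvx
  · exact absurd (hq.adj_of_mem_consecutive hv hx (by grind)) hvx
  · exact Or.inl hx
  · exact Or.inr hx
  · exact absurd hux (hq.not_adj_of_mem_opposite hu hx (by grind))
  · exact absurd hux (hq.not_adj_of_mem_opposite hu hx (by grind))

theorem cnbr_subset_total_of_mem_braceletPlus (hq : IsQuasiGoodPartitionOn G Set.univ A)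
    (h4 : Free G (cycG 4)) (S : Set V) (hu : u ∈ braceletPlus G A i)
    (hv : v ∈ braceletPlus G A i) : cnbr G S u ⊆ cnbr G S v ∨ cnbr G S v ⊆ cnbr G S u := by
  rcases eq_or_ne u v with rfl | huv
  · exact Or.inl subset_rfl
  have hprivate {y z : V} (hy : y ∈ braceletPlus G A i) (hz : z ∈ braceletPlus G A i) (x : V)
      (hyx : G.Adj y x) (hzx : ¬ G.Adj z x) (hxz : x ≠ z) : x ∈ A (i + 2) :=
    (hq.mem_add_two_or_sub_two_of_adj_of_not_adj hy.1 hz.1 hyx hzx hxz).resolve_right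
      fun hx => hy.2.1 x hx hyx
  exact h4.cnbr_subset_total_of_private_mem_clique S (hq.isClique (i + 2))
    (hq.adj_of_mem_same hu.1 hv.1 huv) (hprivate hu hv) (hprivate hv hu)

theorem cnbr_subset_total_of_mem_braceletMinus (hq : IsQuasiGoodPartitionOn G Set.univ A)
    (h4 : Free G (cycG 4)) (S : Set V) (hu : u ∈ braceletMinus G A i)
    (hv : v ∈ braceletMinus G A i) : cnbr G S u ⊆ cnbr G S v ∨ cnbr G S v ⊆ cnbr G S u := by
  rcases eq_or_ne u v with rfl | huv
  · exact Or.inl subset_rfl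
  have hprivate {y z : V} (hy : y ∈ braceletMinus G A i) (hz : z ∈ braceletMinus G A i) (x : V)
      (hyx : G.Adj y x) (hzx : ¬ G.Adj z x) (hxz : x ≠ z) : x ∈ A (i - 2) :=
    (hq.mem_add_two_or_sub_two_of_adj_of_not_adj hy.1 hz.1 hyx hzx hxz).resolve_left
      fun hx => hy.2.1 x hx hyx
  exact h4.cnbr_subset_total_of_private_mem_clique S (hq.isClique (i - 2))
    (hq.adj_of_mem_same hu.1 hv.1 huv) (hprivate hu hv) (hprivate hv hu)

end IsQuasiGoodPartitionOn

end Paper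

theorem statement_11_general {V : Type*} (B : SimpleGraph V) (A : ZMod 7 → Set V)
    (hq : IsQuasiGoodPartitionOn B Set.univ A)
    (h4 : Paper.Free B (cycG 4)) (h5 : Paper.Free B (cycG 5)) :
    ∃ istar : ZMod 7, IsGoodPairOn B Set.univ A istar := by
  obtain ⟨t, ht⟩ := exists_four_consecutive_not (HasSkipEdge B A)
    fun i => hq.not_hasSkipEdge_add_three h4 h5
  refine ⟨t, hq.1, hq.2.1, hq.2.2.1,
    hq.eq_braceletStar_union_braceletPlus_union_braceletMinus h4 h5,
    fun i u hu v hv => hq.cnbr_subset_total_of_mem_braceletPlus h4 _ hu hv,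
    fun i u hu v hv => hq.cnbr_subset_total_of_mem_braceletMinus h4 _ hu hv,
    hq.2.2.2, ?_, ?_, ?_, ?_, ?_, ?_, ?_, ?_⟩
  all_goals first
    | exact braceletPlus_eq_empty (ht _ (by grind))
    | exact braceletMinus_eq_empty (ht _ (by grind))

theorem statement_11 {V : Type*} [Fintype V] (B : SimpleGraph V) (A : ZMod 7 → Set V)
    (hq : IsQuasiGoodPartitionOn B Set.univ A)
    (h7 : Paper.Free B (pathG 7)) (h4 : Paper.Free B (cycG 4)) (h5 : Paper.Free B (cycG 5)) :
    ∃ istar : ZMod 7, IsGoodPairOn B Set.univ A istar :=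
  statement_11_general B A hq h4 h5
end
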